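/- arXiv:2003.02866 — 9 statements merged into one kernel-verified Lean document; each statement's English description precedes it below -/
import Mathlib

section
/- If a graph G contains at least k vertices each of degree at least 2k, then G has a matching consisting of exactly k edges. -/
open SimpleGraph Finset

/-- `M` is a matching in `G`: a set of edges of `G`, pairwise vertex-disjoint. -/
def IsMatching {V : Type*} (G : SimpleGraph V) (M : Finset (Sym2 V)) : Prop :=
  (∀ e ∈ M, e ∈ G.edgeSet) ∧
  ∀ e ∈ M, ∀ f ∈ M, e ≠ f → ∀ v : V, v ∈ e → v ∉ f

/-- The two endpoints of a `Sym2` as a `Finset`. -/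
def sym2Verts {V : Type*} [DecidableEq V] (e : Sym2 V) : Finset V :=
  Sym2.lift ⟨fun a b => {a, b}, fun a b => Finset.pair_comm a b⟩ e

lemma mem_sym2Verts {V : Type*} [DecidableEq V] (e : Sym2 V) (v : V) :
    v ∈ sym2Verts e ↔ v ∈ e := by
  induction e using Sym2.ind with
  | _ a b => simp [sym2Verts]

lemma card_sym2Verts {V : Type*} [DecidableEq V] (e : Sym2 V) :
    (sym2Verts e).card ≤ 2 := by
  induction e using Sym2.ind with
  | _ a b =>
    simp only [sym2Verts, Sym2.lift_mk]
    exact (Finset.card_insert_le _ _).trans (by simp)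

lemma aux_step {V : Type*} [Fintype V] [DecidableEq V]
    (G : SimpleGraph V) [DecidableRel G.Adj] (k : ℕ) (S : Finset V)
    (hScard : k ≤ S.card) (hSdeg : ∀ v ∈ S, 2 * k ≤ G.degree v) :
    ∀ j ≤ k, ∃ M : Finset (Sym2 V), ∃ T : Finset V,
      IsMatching G M ∧ M.card = j ∧ T ⊆ S ∧ T.card = k - j ∧
      (∀ v ∈ T, ∀ e ∈ M, v ∉ e) ∧ (M.sup sym2Verts).card ≤ 2 * j := by
  intro j
  induction j with
  | zero =>
    intro _
    obtain ⟨T, hTS, hTcard⟩ := Finset.exists_subset_card_eq hScard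
    exact ⟨∅, T, ⟨by simp, by simp⟩, by simp, hTS, by simpa using hTcard, by simp, by simp⟩
  | succ j ih =>
    intro hjk
    obtain ⟨M, T, ⟨hMedge, hMdisj⟩, hMcard, hTS, hTcard, hTdisj, hMverts⟩ :=
      ih (Nat.le_of_succ_le hjk)
    -- pick v ∈ T
    have hTne : T.Nonempty := by
      rw [← Finset.card_pos, hTcard]
      omega
    obtain ⟨v, hvT⟩ := hTne
    -- forbidden set
    set F : Finset V := (M.sup sym2Verts) ∪ T with hF
    have hFcard : F.card ≤ 2 * j + (k - j) := by
      calc F.card ≤ (M.sup sym2Verts).card + T.card := Finset.card_union_le _ _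
        _ ≤ 2 * j + (k - j) := by omega
    have hdeg : 2 * k ≤ G.degree v := hSdeg v (hTS hvT)
    have hFlt : F.card < G.degree v := by omega
    -- find a neighbor outside F
    have : ¬ (G.neighborFinset v ⊆ F) := fun h =>
      absurd (Finset.card_le_card h) (by rw [SimpleGraph.card_neighborFinset_eq_degree]; omega)
    obtain ⟨u, huN, huF⟩ := Finset.not_subset.mp this
    have hadj : G.Adj v u := (SimpleGraph.mem_neighborFinset G v u).mp huN
    have huM : ∀ e ∈ M, u ∉ e := by
      intro e he hue
      exact huF (Finset.mem_union_left _ (Finset.mem_sup.mpr ⟨e, he, (mem_sym2Verts e u).mpr hue⟩))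
    have hvM : ∀ e ∈ M, v ∉ e := hTdisj v hvT
    have huT : u ∉ T := fun h => huF (Finset.mem_union_right _ h)
    refine ⟨insert s(v, u) M, T.erase v, ⟨?_, ?_⟩, ?_, ?_, ?_, ?_, ?_⟩
    · intro e he
      rcases Finset.mem_insert.mp he with h | h
      · subst h; exact hadj
      · exact hMedge e h
    · intro e he f hf hef w hwe hwf
      rcases Finset.mem_insert.mp he with h | h <;>
        rcases Finset.mem_insert.mp hf with h' | h'
      · exact hef (h.trans h'.symm)
      · subst h
        rcases Sym2.mem_iff.mp hwe with rfl | rfl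
        · exact hvM f h' hwf
        · exact huM f h' hwf
      · subst h'
        rcases Sym2.mem_iff.mp hwf with rfl | rfl
        · exact hvM e h hwe
        · exact huM e h hwe
      · exact hMdisj e h f h' hef w hwe hwf
    · rw [Finset.card_insert_of_notMem, hMcard]
      intro h
      exact hvM _ h (Sym2.mem_mk_left v u)
    · exact (Finset.erase_subset _ _).trans hTS
    · rw [Finset.card_erase_of_mem hvT, hTcard]; omega
    · intro w hw e he hwe
      have hwT : w ∈ T := Finset.mem_of_mem_erase hw
      have hwv : w ≠ v := Finset.ne_of_mem_erase hw
      rcases Finset.mem_insert.mp he with h | h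
      · subst h
        rcases Sym2.mem_iff.mp hwe with rfl | rfl
        · exact hwv rfl
        · exact huT hwT
      · exact hTdisj w hwT e h hwe
    · calc ((insert s(v,u) M).sup sym2Verts).card
          ≤ (sym2Verts s(v,u) ∪ M.sup sym2Verts).card := by
            apply Finset.card_le_card
            rw [Finset.sup_insert]
            rfl
        _ ≤ (sym2Verts s(v,u)).card + (M.sup sym2Verts).card := Finset.card_union_le _ _
        _ ≤ 2 * (j + 1) := by have := card_sym2Verts s(v,u); omega

/-- If a graph `G` contains at least `k` vertices each of degree at least `2k`,
then `G` has a matching consisting of exactly `k` edges. -/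
theorem stmt_0 {V : Type*} [Fintype V] [DecidableEq V]
    (G : SimpleGraph V) [DecidableRel G.Adj] (k : ℕ) (S : Finset V)
    (hScard : k ≤ S.card) (hSdeg : ∀ v ∈ S, 2 * k ≤ G.degree v) :
    ∃ M : Finset (Sym2 V), IsMatching G M ∧ M.card = k := by
  obtain ⟨M, T, hM, hMcard, _⟩ := aux_step G k S hScard hSdeg k le_rfl
  exact ⟨M, hM, hMcard⟩
end

section
/- Let G be a graph with exactly h < k large-vertices (vertices of degree at least 2k), and let G_h be obtained from G by deleting, for each large-vertex v, some deg(v) - 2k edges joining v to small-vertices (so every large-vertex has degree exactly 2k in G_h). Then G has a k-matching if and only if G_h has a k-matching. -/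
open SimpleGraph Finset

/-- Replacement step: if a matching edge `s(a,b)` of `G` is missing in `Gh` and `a` is large,
we can swap it for a `Gh`-edge at `a`, decreasing the number of non-`Gh` edges. -/
lemma replace {V : Type*} [Fintype V] [DecidableEq V]
    (G Gh : SimpleGraph V) [DecidableRel G.Adj] [DecidableRel Gh.Adj]
    (k : ℕ) (hsub : Gh ≤ G)
    (hlarge : ∀ v : V, 2 * k ≤ G.degree v → Gh.degree v = 2 * k)
    (M : Finset (Sym2 V)) (hM : IsMatching G M) (hcard : M.card = k)
    (a b : V) (hnab : ¬ Gh.Adj a b) (hla : 2 * k ≤ G.degree a)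
    (he : s(a, b) ∈ M) :
    ∃ M' : Finset (Sym2 V), IsMatching G M' ∧ M'.card = k ∧
      (M'.filter (fun e => e ∉ Gh.edgeSet)).card <
      (M.filter (fun e => e ∉ Gh.edgeSet)).card := by
  have hk1 : 1 ≤ k := by
    rcases Nat.eq_zero_or_pos k with h0 | h; · simp [h0] at hcard; simp [hcard] at he
    exact h
  -- find an uncovered Gh-neighbor c of a
  have hN : (Gh.neighborFinset a).card = 2 * k := by
    rw [Gh.card_neighborFinset_eq_degree]; exact hlarge a hla
  have hex : ∃ c ∈ Gh.neighborFinset a, ∀ f ∈ M, c ∉ f := by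
    by_contra hcon
    push_neg at hcon
    have hsubN : Gh.neighborFinset a ⊆
        (M.erase s(a, b)).biUnion (fun f => Finset.univ.filter (fun v => v ∈ f)) := by
      intro c hc
      obtain ⟨f, hf, hcf⟩ := hcon c hc
      have hadj : Gh.Adj a c := (Gh.mem_neighborFinset a c).1 hc
      have hfe : f ≠ s(a, b) := by
        rintro rfl
        rcases Sym2.mem_iff.1 hcf with rfl | rfl
        · exact Gh.irrefl hadj
        · exact hnab hadj
      exact Finset.mem_biUnion.2 ⟨f, Finset.mem_erase.2 ⟨hfe, hf⟩, by simp [hcf]⟩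
    have hle : (Gh.neighborFinset a).card ≤ (M.erase s(a, b)).card * 2 := by
      calc (Gh.neighborFinset a).card
          ≤ ((M.erase s(a, b)).biUnion (fun f => Finset.univ.filter (fun v => v ∈ f))).card :=
            Finset.card_le_card hsubN
        _ ≤ ∑ f ∈ M.erase s(a, b), (Finset.univ.filter (fun v => v ∈ f)).card :=
            Finset.card_biUnion_le
        _ ≤ ∑ _f ∈ M.erase s(a, b), 2 := by
            refine Finset.sum_le_sum fun f _ => ?_
            induction f using Sym2.inductionOn with
            | hf x y =>
              have : Finset.univ.filter (fun v => v ∈ s(x, y)) ⊆ {x, y} := by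
                intro v hv
                simp only [Finset.mem_filter, Sym2.mem_iff] at hv
                simp [hv.2]
              calc _ ≤ ({x, y} : Finset V).card := Finset.card_le_card this
                _ ≤ 2 := Finset.card_insert_le _ _ |>.trans (by simp)
        _ = (M.erase s(a, b)).card * 2 := by rw [Finset.sum_const, smul_eq_mul]
    rw [hN, Finset.card_erase_of_mem he, hcard] at hle
    omega
  obtain ⟨c, hcN, hcun⟩ := hex
  have hadjc : Gh.Adj a c := (Gh.mem_neighborFinset a c).1 hcN
  refine ⟨insert s(a, c) (M.erase s(a, b)), ⟨?_, ?_⟩, ?_, ?_⟩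
  · intro e hee
    rcases Finset.mem_insert.1 hee with rfl | hee
    · exact (hsub hadjc : G.Adj a c)
    · exact hM.1 e (Finset.mem_of_mem_erase hee)
  · intro e hee f hff hef v hve
    have key : ∀ f ∈ M.erase s(a, b), ∀ v, v ∈ s(a, c) → v ∉ f := by
      intro f hf v hv
      rcases Finset.mem_erase.1 hf with ⟨hfne, hfM⟩
      have ha : a ∉ f := hM.2 s(a, b) he f hfM (Ne.symm hfne) a (by simp)
      have hc : c ∉ f := hcun f hfM
      rcases Sym2.mem_iff.1 hv with h | h
      · exact h ▸ ha
      · exact h ▸ hc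
    rcases Finset.mem_insert.1 hee with rfl | hee
    · rcases Finset.mem_insert.1 hff with rfl | hff
      · exact absurd rfl hef
      · exact key f hff v hve
    · rcases Finset.mem_insert.1 hff with rfl | hff
      · intro hvf; exact key e hee v hvf hve
      · exact hM.2 e (Finset.mem_of_mem_erase hee) f (Finset.mem_of_mem_erase hff) hef v hve
  · have hnotin : s(a, c) ∉ M.erase s(a, b) := fun h =>
      hcun _ (Finset.mem_of_mem_erase h) (by simp)
    rw [Finset.card_insert_of_notMem hnotin, Finset.card_erase_of_mem he, hcard]
    omega
  · have hgc : s(a, c) ∈ Gh.edgeSet := hadjc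
    have hab : s(a, b) ∉ Gh.edgeSet := hnab
    rw [Finset.filter_insert, if_neg (by simp [hgc]), Finset.filter_erase]
    have hmem : s(a, b) ∈ M.filter (fun e => e ∉ Gh.edgeSet) :=
      Finset.mem_filter.2 ⟨he, hab⟩
    exact Finset.card_erase_lt_of_mem hmem

/-- By induction on the number of edges outside `Gh`, any `k`-matching in `G` yields one
whose edges all lie in `Gh`. -/
lemma push_down {V : Type*} [Fintype V] [DecidableEq V]
    (G Gh : SimpleGraph V) [DecidableRel G.Adj] [DecidableRel Gh.Adj]
    (k : ℕ) (hsub : Gh ≤ G)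
    (hdel : ∀ a b : V, G.Adj a b → ¬ Gh.Adj a b →
      (2 * k ≤ G.degree a ∧ G.degree b < 2 * k) ∨
      (G.degree a < 2 * k ∧ 2 * k ≤ G.degree b))
    (hlarge : ∀ v : V, 2 * k ≤ G.degree v → Gh.degree v = 2 * k) :
    ∀ n (M : Finset (Sym2 V)), (M.filter (fun e => e ∉ Gh.edgeSet)).card ≤ n →
      IsMatching G M → M.card = k →
      ∃ M' : Finset (Sym2 V), IsMatching Gh M' ∧ M'.card = k := by
  intro n
  induction n with
  | zero =>
    intro M hn hM hcard
    refine ⟨M, ⟨fun e he => ?_, hM.2⟩, hcard⟩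
    by_contra hne
    have : e ∈ M.filter (fun e => e ∉ Gh.edgeSet) := Finset.mem_filter.2 ⟨he, hne⟩
    simp [Finset.card_eq_zero.1 (Nat.le_zero.1 hn)] at this
  | succ n ih =>
    intro M hn hM hcard
    by_cases hz : (M.filter (fun e => e ∉ Gh.edgeSet)).card = 0
    · refine ⟨M, ⟨fun e he => ?_, hM.2⟩, hcard⟩
      by_contra hne
      have : e ∈ M.filter (fun e => e ∉ Gh.edgeSet) := Finset.mem_filter.2 ⟨he, hne⟩
      simp [Finset.card_eq_zero.1 hz] at this
    · obtain ⟨e, hef⟩ := Finset.card_pos.1 (Nat.pos_of_ne_zero hz)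
      obtain ⟨heM, hne⟩ := Finset.mem_filter.1 hef
      induction e using Sym2.inductionOn with
      | hf a b =>
        have hGab : G.Adj a b := hM.1 _ heM
        have hnab : ¬ Gh.Adj a b := fun h => hne h
        rcases hdel a b hGab hnab with ⟨hla, _⟩ | ⟨_, hlb⟩
        · obtain ⟨M', hM', hc', hlt⟩ :=
            replace G Gh k hsub hlarge M hM hcard a b hnab hla heM
          exact ih M' (by omega) hM' hc'
        · have hnba : ¬ Gh.Adj b a := fun h => hnab h.symm
          have heM' : s(b, a) ∈ M := by rwa [Sym2.eq_swap]
          obtain ⟨M', hM', hc', hlt⟩ :=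
            replace G Gh k hsub hlarge M hM hcard b a hnba hlb heM'
          exact ih M' (by omega) hM' hc'

/-- Let `G` have exactly `h < k` large-vertices (degree `≥ 2k`), and let `Gh` be obtained
from `G` by deleting, for each large-vertex, some of its edges to small-vertices so that
every large-vertex has degree exactly `2k` in `Gh` (only large–small edges are deleted).
Then `G` has a `k`-matching iff `Gh` has a `k`-matching. -/
theorem stmt_2 {V : Type*} [Fintype V] [DecidableEq V]
    (G Gh : SimpleGraph V) [DecidableRel G.Adj] [DecidableRel Gh.Adj]
    (k h : ℕ) (hhk : h < k)
    (hnum : (Finset.univ.filter (fun v => 2 * k ≤ G.degree v)).card = h)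
    (hsub : Gh ≤ G)
    (hdel : ∀ a b : V, G.Adj a b → ¬ Gh.Adj a b →
      (2 * k ≤ G.degree a ∧ G.degree b < 2 * k) ∨
      (G.degree a < 2 * k ∧ 2 * k ≤ G.degree b))
    (hlarge : ∀ v : V, 2 * k ≤ G.degree v → Gh.degree v = 2 * k) :
    (∃ M : Finset (Sym2 V), IsMatching G M ∧ M.card = k) ↔
    (∃ M : Finset (Sym2 V), IsMatching Gh M ∧ M.card = k) := by
  constructor
  · rintro ⟨M, hM, hcard⟩
    exact push_down G Gh k hsub hdel hlarge _ M le_rfl hM hcard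
  · rintro ⟨M, hM, hcard⟩
    exact ⟨M, ⟨fun e he => SimpleGraph.edgeSet_mono hsub (hM.1 e he), hM.2⟩, hcard⟩
end

section
/- Let G be a graph with h < k large-vertices, let G_h be an h-reduced graph of G (every large-vertex has degree exactly 2k in G_h), and suppose a maximum k-matching of G restricted to G_h has at most r < k edges in G_h. Then every k-matching M of G with exactly r edges in G_h covers all large-vertices of G. -/
open SimpleGraph Finset

/-- `v` is covered by the matching `M`. -/
def Covers {V : Type*} (M : Finset (Sym2 V)) (v : V) : Prop := ∃ e ∈ M, v ∈ e

/-- Let `G` have `h < k` large-vertices (degree `≥ 2k`), `Gh` an `h`-reduced graph of `G`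
(only large–small edges deleted, every large-vertex of degree exactly `2k` in `Gh`), and
suppose every `k`-matching of `G` has at most `r < k` edges in `Gh`. Then every
`k`-matching `M` of `G` with exactly `r` edges in `Gh` covers all large-vertices of `G`. -/
theorem stmt_3 {V : Type*} [Fintype V] [DecidableEq V]
    (G Gh : SimpleGraph V) [DecidableRel G.Adj] [DecidableRel Gh.Adj]
    (k h r : ℕ) (hhk : h < k) (hrk : r < k)
    (hnum : (Finset.univ.filter (fun v => 2 * k ≤ G.degree v)).card = h)
    (hsub : Gh ≤ G)
    (hdel : ∀ a b : V, G.Adj a b → ¬ Gh.Adj a b →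
      (2 * k ≤ G.degree a ∧ G.degree b < 2 * k) ∨
      (G.degree a < 2 * k ∧ 2 * k ≤ G.degree b))
    (hlarge : ∀ v : V, 2 * k ≤ G.degree v → Gh.degree v = 2 * k)
    (hmax : ∀ M' : Finset (Sym2 V), IsMatching G M' → M'.card = k →
      (M'.filter (fun e => e ∈ Gh.edgeFinset)).card ≤ r)
    (M : Finset (Sym2 V)) (hM : IsMatching G M) (hMk : M.card = k)
    (hMr : (M.filter (fun e => e ∈ Gh.edgeFinset)).card = r) :
    ∀ v : V, 2 * k ≤ G.degree v → Covers M v := by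
  intro v hv
  by_contra hnc
  have hvnot : ∀ e ∈ M, v ∉ e := by
    intro e he hve
    exact hnc ⟨e, he, hve⟩
  -- neighbor set of v in Gh has card 2k
  have hN : (Gh.neighborFinset v).card = 2 * k :=
    (Gh.card_neighborFinset_eq_degree v).trans (hlarge v hv)
  set F := M.filter (fun e => e ∈ Gh.edgeFinset) with hF
  -- set of vertices touched by edges in F
  set T := F.biUnion (fun e => Finset.univ.filter (fun w => w ∈ e)) with hT
  have hTcard : T.card ≤ 2 * r := by
    rw [hT]
    have := Finset.card_biUnion_le_card_mul F
      (fun e => Finset.univ.filter (fun w => w ∈ e)) 2 ?_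
    · omega
    · intro e he
      induction e with
      | h a b =>
        have : (Finset.univ.filter (fun w => w ∈ s(a, b))) ⊆ {a, b} := by
          intro w hw
          simp only [Finset.mem_filter, Sym2.mem_iff] at hw
          simp [hw.2]
        calc (Finset.univ.filter (fun w => w ∈ s(a, b))).card ≤ ({a, b} : Finset V).card :=
              Finset.card_le_card this
          _ ≤ 2 := Finset.card_insert_le _ _ |>.trans (by simp)
  have hlt : T.card < (Gh.neighborFinset v).card := by
    rw [hN]; omega
  obtain ⟨u, huN, huT⟩ := Finset.not_subset.1 (fun hss => absurd (Finset.card_le_card hss) (not_le.2 hlt))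
  have hadj : Gh.Adj v u := by rwa [SimpleGraph.mem_neighborFinset] at huN
  have huT' : ∀ e ∈ M, e ∈ Gh.edgeFinset → u ∉ e := by
    intro e he heGh hue
    exact huT (Finset.mem_biUnion.2 ⟨e, Finset.mem_filter.2 ⟨he, heGh⟩,
      Finset.mem_filter.2 ⟨Finset.mem_univ u, hue⟩⟩)
  -- pick an edge e ∈ M, not in Gh, such that u is in no other edge of M
  have hkey : ∃ e ∈ M, e ∉ Gh.edgeFinset ∧ ∀ f ∈ M, f ≠ e → u ∉ f := by
    by_cases hcov : ∃ f ∈ M, u ∈ f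
    · obtain ⟨e, he, hue⟩ := hcov
      refine ⟨e, he, fun hGh => huT' e he hGh hue, fun f hf hfe huf => ?_⟩
      exact hM.2 f hf e he hfe u huf hue
    · push_neg at hcov
      have hlt' : F.card < M.card := by rw [hMr, hMk]; exact hrk
      obtain ⟨e, heM, heF⟩ := Finset.not_subset.1 (fun hss => absurd (Finset.card_le_card hss) (not_le.2 hlt'))
      refine ⟨e, heM, fun h => heF (Finset.mem_filter.2 ⟨heM, h⟩),
        fun f hf _ => hcov f hf⟩
  obtain ⟨e, heM, heGh, huniq⟩ := hkey
  -- build the new matching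
  set M' := insert s(v, u) (M.erase e) with hM'
  have hvuGh : s(v, u) ∈ Gh.edgeFinset := by
    rw [SimpleGraph.mem_edgeFinset, SimpleGraph.mem_edgeSet]; exact hadj
  have hvuG : s(v, u) ∈ G.edgeSet := by
    rw [SimpleGraph.mem_edgeSet]; exact hsub hadj
  have hvuM : s(v, u) ∉ M := fun h => hvnot _ h (by simp)
  have hvuMe : s(v, u) ∉ M.erase e := fun h => hvuM (Finset.mem_of_mem_erase h)
  have huf : ∀ f ∈ M.erase e, u ∉ f := by
    intro f hf
    exact huniq f (Finset.mem_of_mem_erase hf) (Finset.ne_of_mem_erase hf)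
  have hmatch : IsMatching G M' := by
    constructor
    · intro f hf
      rcases Finset.mem_insert.1 hf with h | h
      · exact h ▸ hvuG
      · exact hM.1 f (Finset.mem_of_mem_erase h)
    · intro e1 he1 e2 he2 hne w hw1
      rcases Finset.mem_insert.1 he1 with h1 | h1 <;>
        rcases Finset.mem_insert.1 he2 with h2 | h2
      · exact absurd (h1.trans h2.symm) hne
      · subst h1
        rcases Sym2.mem_iff.1 hw1 with rfl | rfl
        · exact hvnot e2 (Finset.mem_of_mem_erase h2)
        · exact huf e2 h2
      · subst h2
        intro hw2
        rcases Sym2.mem_iff.1 hw2 with rfl | rfl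
        · exact hvnot e1 (Finset.mem_of_mem_erase h1) hw1
        · exact huf e1 h1 hw1
      · exact hM.2 e1 (Finset.mem_of_mem_erase h1) e2 (Finset.mem_of_mem_erase h2) hne w hw1
  have hcard : M'.card = k := by
    rw [hM', Finset.card_insert_of_notMem hvuMe, Finset.card_erase_of_mem heM, hMk]
    omega
  have hfilter : (M'.filter (fun e => e ∈ Gh.edgeFinset)).card = r + 1 := by
    have heF : e ∉ F := fun h => heGh (Finset.mem_filter.1 h).2
    rw [hM', Finset.filter_insert, if_pos hvuGh, Finset.card_insert_of_notMem
      (fun h => hvuMe (Finset.mem_of_mem_filter _ h)),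
      Finset.filter_erase, ← hF, Finset.erase_eq_of_notMem heF, hMr]
  have := hmax M' hmatch hcard
  omega
end

section
/- Let G_h be a graph with h large-vertices (each of degree exactly 2k, with h < k) in which every other vertex is a small-vertex (degree < 2k). If G_h contains a subgraph G_h' that includes all edges incident to the large-vertices and at least (4k-3)(k-h) edges whose both endpoints are small-vertices, then G_h' contains a k-matching. -/
open SimpleGraph Finset

lemma greedy_matching {V : Type*} [Fintype V] [DecidableEq V] (c : ℕ) (hc : 1 ≤ c) :
    ∀ (m : ℕ) (S : Finset (Sym2 V)),
    (∀ e ∈ S, (S.filter (fun f => ∃ v : V, v ∈ e ∧ v ∈ f)).card ≤ c) →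
    c * m ≤ S.card →
    ∃ M : Finset (Sym2 V), M ⊆ S ∧
      (∀ e ∈ M, ∀ f ∈ M, e ≠ f → ∀ v : V, v ∈ e → v ∉ f) ∧ M.card = m := by
  intro m
  induction m with
  | zero => intro S _ _; exact ⟨∅, by simp, by simp, rfl⟩
  | succ m ih =>
    intro S hbound hcard
    have hS : S.Nonempty := by
      rw [← Finset.card_pos]
      have h1 : c ≤ c * (m + 1) := Nat.le_mul_of_pos_right c (Nat.succ_pos m)
      omega
    obtain ⟨e, he⟩ := hS
    set T := S.filter (fun f => ∀ v : V, v ∈ e → v ∉ f) with hT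
    have hsplit : (S.filter (fun f => ∃ v : V, v ∈ e ∧ v ∈ f)).card + T.card = S.card := by
      rw [hT]
      have : (S.filter (fun f => ∀ v : V, v ∈ e → v ∉ f))
          = S.filter (fun f => ¬ ∃ v : V, v ∈ e ∧ v ∈ f) := by
        apply Finset.filter_congr
        intro f _
        push_neg
        rfl
      rw [this]
      exact Finset.card_filter_add_card_filter_not _
    have hTcard : c * m ≤ T.card := by
      have h1 := hbound e he
      have : c * (m + 1) = c * m + c := by ring
      omega
    have hTbound : ∀ f ∈ T, (T.filter (fun g => ∃ v : V, v ∈ f ∧ v ∈ g)).card ≤ c := by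
      intro f hf
      calc (T.filter (fun g => ∃ v : V, v ∈ f ∧ v ∈ g)).card
          ≤ (S.filter (fun g => ∃ v : V, v ∈ f ∧ v ∈ g)).card :=
            Finset.card_le_card (Finset.filter_subset_filter _ (Finset.filter_subset _ _))
        _ ≤ c := hbound f (Finset.filter_subset _ _ hf)
    obtain ⟨M, hMsub, hMmatch, hMcard⟩ := ih T hTbound hTcard
    have heT : e ∉ T := by
      rw [hT, Finset.mem_filter]
      rintro ⟨-, h⟩
      induction e using Sym2.ind with
      | _ a b => exact h a (by simp) (by simp)
    have heM : e ∉ M := fun h => heT (hMsub h)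
    refine ⟨insert e M, ?_, ?_, ?_⟩
    · intro f hf
      rcases Finset.mem_insert.mp hf with rfl | hf
      · exact he
      · exact Finset.filter_subset _ _ (hMsub hf)
    · have hdisj : ∀ f ∈ M, ∀ v : V, v ∈ e → v ∉ f := by
        intro f hf v hv
        exact (Finset.mem_filter.mp (hMsub hf)).2 v hv
      intro f hf g hg hfg v hvf hvg
      rcases Finset.mem_insert.mp hf with hfe | hf <;>
        rcases Finset.mem_insert.mp hg with hge | hg
      · exact hfg (hfe.trans hge.symm)
      · exact hdisj g hg v (hfe ▸ hvf) hvg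
      · exact hdisj f hf v (hge ▸ hvg) hvf
      · exact hMmatch f hf g hg hfg v hvf hvg
    · rw [Finset.card_insert_of_notMem heM, hMcard]

/-- Let `Gh` have `h < k` large-vertices (each of degree exactly `2k`), every other vertex
being a small-vertex (degree `< 2k`). If `Gh` has a subgraph `Gh'` containing all edges
incident to the large-vertices and at least `(4k-3)(k-h)` edges with both endpoints
small-vertices, then `Gh'` contains a `k`-matching. -/
theorem stmt_4 {V : Type*} [Fintype V] [DecidableEq V]
    (Gh Gh' : SimpleGraph V) [DecidableRel Gh.Adj] [DecidableRel Gh'.Adj]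
    (k h : ℕ) (hhk : h < k) (L : Finset V) (hLcard : L.card = h)
    (hLdeg : ∀ v ∈ L, Gh.degree v = 2 * k)
    (hsmall : ∀ v : V, v ∉ L → Gh.degree v < 2 * k)
    (hsub : Gh' ≤ Gh)
    (hinc : ∀ v ∈ L, ∀ w : V, Gh.Adj v w → Gh'.Adj v w)
    (hsmalledges :
      (4 * k - 3) * (k - h) ≤
        (Gh'.edgeFinset.filter (fun e => ∀ v ∈ e, v ∉ L)).card) :
    ∃ M : Finset (Sym2 V), IsMatching Gh' M ∧ M.card = k := by
  have hk1 : 1 ≤ k := by omega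
  have hdegmono : ∀ v : V, Gh'.degree v ≤ Gh.degree v := by
    intro v
    apply Finset.card_le_card
    intro w hw
    rw [SimpleGraph.mem_neighborFinset] at hw ⊢
    exact hsub hw
  set S := Gh'.edgeFinset.filter (fun e => ∀ v ∈ e, v ∉ L) with hSdef
  -- bound on intersecting edges
  have hbound : ∀ e ∈ S, (S.filter (fun f => ∃ v : V, v ∈ e ∧ v ∈ f)).card ≤ 4 * k - 3 := by
    intro e he
    rw [hSdef, Finset.mem_filter, SimpleGraph.mem_edgeFinset] at he
    obtain ⟨heE, hesmall⟩ := he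
    induction e using Sym2.ind with
    | _ a b =>
    have ha : a ∉ L := hesmall a (by simp)
    have hb : b ∉ L := hesmall b (by simp)
    have hda : Gh'.degree a ≤ 2 * k - 1 := by
      have := hdegmono a; have := hsmall a ha; omega
    have hdb : Gh'.degree b ≤ 2 * k - 1 := by
      have := hdegmono b; have := hsmall b hb; omega
    set A := Gh'.incidenceFinset a
    set B := Gh'.incidenceFinset b
    have hsubAB : S.filter (fun f => ∃ v : V, v ∈ s(a, b) ∧ v ∈ f) ⊆ A ∪ B := by
      intro f hf
      rw [Finset.mem_filter] at hf
      obtain ⟨hfS, v, hve, hvf⟩ := hf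
      have hfE : f ∈ Gh'.edgeSet := by
        rw [hSdef, Finset.mem_filter, SimpleGraph.mem_edgeFinset] at hfS
        exact hfS.1
      rw [Sym2.mem_iff] at hve
      rcases hve with rfl | rfl
      · exact Finset.mem_union_left _ (by rw [SimpleGraph.mem_incidenceFinset]; exact ⟨hfE, hvf⟩)
      · exact Finset.mem_union_right _ (by rw [SimpleGraph.mem_incidenceFinset]; exact ⟨hfE, hvf⟩)
    have heA : s(a,b) ∈ A := by
      rw [SimpleGraph.mem_incidenceFinset]; exact ⟨heE, by simp⟩
    have heB : s(a,b) ∈ B := by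
      rw [SimpleGraph.mem_incidenceFinset]; exact ⟨heE, by simp⟩
    have hinter : 1 ≤ (A ∩ B).card := Finset.card_pos.mpr ⟨s(a,b), Finset.mem_inter.mpr ⟨heA, heB⟩⟩
    have hcardA : A.card = Gh'.degree a := Gh'.card_incidenceFinset_eq_degree a
    have hcardB : B.card = Gh'.degree b := Gh'.card_incidenceFinset_eq_degree b
    have hunion := Finset.card_union_add_card_inter A B
    have := Finset.card_le_card hsubAB
    omega
  obtain ⟨M0, hM0sub, hM0match, hM0card⟩ :=
    greedy_matching (4 * k - 3) (by omega) (k - h) S hbound (le_trans hsmalledges le_rfl)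
  -- extension over subsets of L
  have key : ∀ L' : Finset V, L' ⊆ L →
      ∃ M : Finset (Sym2 V), (∀ e ∈ M, e ∈ Gh'.edgeSet) ∧
        (∀ e ∈ M, ∀ f ∈ M, e ≠ f → ∀ v : V, v ∈ e → v ∉ f) ∧
        M.card = (k - h) + L'.card ∧
        (∀ v ∈ L, (∃ e ∈ M, v ∈ e) ↔ v ∈ L') := by
    intro L'
    induction L' using Finset.induction_on with
    | empty =>
      intro _
      refine ⟨M0, ?_, hM0match, by simp [hM0card], ?_⟩
      · intro e heM
        have := hM0sub heM
        rw [hSdef, Finset.mem_filter, SimpleGraph.mem_edgeFinset] at this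
        exact this.1
      · intro v hvL
        simp only [Finset.notMem_empty, iff_false]
        rintro ⟨e, heM, hve⟩
        have := hM0sub heM
        rw [hSdef, Finset.mem_filter] at this
        exact this.2 v hve hvL
    | @insert a s ha ih =>
      intro hins
      have haL : a ∈ L := hins (Finset.mem_insert_self a s)
      have hsL : s ⊆ L := fun x hx => hins (Finset.mem_insert_of_mem hx)
      obtain ⟨M, hME, hMmatch, hMcard, hMcov⟩ := ih hsL
      -- the covered set
      set C := Finset.univ.filter (fun v : V => ∃ e ∈ M, v ∈ e) with hC
      have hCcard : C.card ≤ 2 * M.card := by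
        have hsub2 : C ⊆ M.biUnion (fun e => ({e.out.1, e.out.2} : Finset V)) := by
          intro v hv
          rw [hC, Finset.mem_filter] at hv
          obtain ⟨-, e, heM, hve⟩ := hv
          rw [Finset.mem_biUnion]
          refine ⟨e, heM, ?_⟩
          have : v = e.out.1 ∨ v = e.out.2 := by
            rw [← Sym2.mem_iff]
            convert hve
            exact e.out_eq
          simp [this]
        calc C.card ≤ (M.biUnion (fun e => ({e.out.1, e.out.2} : Finset V))).card :=
              Finset.card_le_card hsub2
          _ ≤ ∑ e ∈ M, ({e.out.1, e.out.2} : Finset V).card := Finset.card_biUnion_le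
          _ ≤ ∑ e ∈ M, 2 := Finset.sum_le_sum (fun e _ => Finset.card_insert_le _ _ |>.trans (by simp))
          _ = 2 * M.card := by rw [Finset.sum_const, smul_eq_mul, mul_comm]
      have hCL : C ∩ L = s := by
        ext v
        rw [Finset.mem_inter, hC, Finset.mem_filter]
        constructor
        · rintro ⟨⟨-, hcov⟩, hvL⟩
          exact (hMcov v hvL).mp hcov
        · intro hvs
          have hvL := hsL hvs
          exact ⟨⟨Finset.mem_univ v, (hMcov v hvL).mpr hvs⟩, hvL⟩
      have hh1 : s.card + 1 ≤ h := by
        have := Finset.card_le_card hins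
        rw [hLcard, Finset.card_insert_of_notMem ha] at this
        exact this
      have hCunL : (C ∪ L).card ≤ 2 * k - 1 := by
        have h1 : (C ∪ L).card + (C ∩ L).card = C.card + L.card :=
          Finset.card_union_add_card_inter C L
        rw [hCL, hLcard] at h1
        have h2 : M.card = (k - h) + s.card := hMcard
        omega
      -- find a free neighbor
      have hdeg : (Gh.neighborFinset a).card = 2 * k := by
        rw [SimpleGraph.card_neighborFinset_eq_degree]; exact hLdeg a haL
      have : ∃ w ∈ Gh.neighborFinset a, w ∉ C ∪ L := by
        by_contra hcon
        push_neg at hcon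
        have : Gh.neighborFinset a ⊆ C ∪ L := hcon
        have := Finset.card_le_card this
        omega
      obtain ⟨w, hwnbr, hwfree⟩ := this
      rw [SimpleGraph.mem_neighborFinset] at hwnbr
      have hwC : w ∉ C := fun hw => hwfree (Finset.mem_union_left _ hw)
      have hwL : w ∉ L := fun hw => hwfree (Finset.mem_union_right _ hw)
      have hadj : Gh'.Adj a w := hinc a haL w hwnbr
      have hacov : ¬ ∃ e ∈ M, a ∈ e := by
        intro hcov
        exact ha ((hMcov a haL).mp hcov)
      have hwcov : ¬ ∃ e ∈ M, w ∈ e := by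
        intro hcov
        exact hwC (by rw [hC, Finset.mem_filter]; exact ⟨Finset.mem_univ w, hcov⟩)
      have henew : s(a, w) ∉ M := by
        intro hmem
        exact hacov ⟨s(a,w), hmem, by simp⟩
      refine ⟨insert s(a,w) M, ?_, ?_, ?_, ?_⟩
      · intro e he
        rcases Finset.mem_insert.mp he with rfl | he
        · exact hadj
        · exact hME e he
      · have hdisj : ∀ f ∈ M, ∀ v : V, v ∈ s(a, w) → v ∉ f := by
          intro f hf v hv hvf
          rw [Sym2.mem_iff] at hv
          rcases hv with rfl | rfl
          · exact hacov ⟨f, hf, hvf⟩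
          · exact hwcov ⟨f, hf, hvf⟩
        intro e he f hf hef v hve hvf
        rcases Finset.mem_insert.mp he with hee | he <;>
          rcases Finset.mem_insert.mp hf with hfe | hf
        · exact hef (hee.trans hfe.symm)
        · exact hdisj f hf v (hee ▸ hve) hvf
        · exact hdisj e he v (hfe ▸ hvf) hve
        · exact hMmatch e he f hf hef v hve hvf
      · rw [Finset.card_insert_of_notMem henew, hMcard,
          Finset.card_insert_of_notMem ha]
        omega
      · intro v hvL
        rw [Finset.mem_insert]
        constructor
        · rintro ⟨e, he, hve⟩
          rcases Finset.mem_insert.mp he with rfl | he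
          · rw [Sym2.mem_iff] at hve
            rcases hve with rfl | rfl
            · exact Or.inl rfl
            · exact absurd hvL hwL
          · exact Or.inr ((hMcov v hvL).mp ⟨e, he, hve⟩)
        · rintro (rfl | hvs)
          · exact ⟨s(v, w), Finset.mem_insert_self _ _, by simp⟩
          · obtain ⟨e, he, hve⟩ := (hMcov v hvL).mpr hvs
            exact ⟨e, Finset.mem_insert_of_mem he, hve⟩
  obtain ⟨M, hME, hMmatch, hMcard, -⟩ := key L le_rfl
  exact ⟨M, ⟨hME, hMmatch⟩, by rw [hMcard, hLcard]; omega⟩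
end

section
/- Let G be a weighted graph where every edge has a distinct weight, let v be a vertex of degree at least 8k, and let G' be obtained from G by deleting all but the 8k heaviest edges incident to v. Then the maximum weight of a k-matching in G' equals the maximum weight of a k-matching in G. -/
open SimpleGraph Finset

/-- `e` is among the `m` heaviest edges incident to `v` in `G`: `e` is incident to `v`
and fewer than `m` edges incident to `v` are heavier than `e`. -/
def AmongHeaviest {V : Type*} [Fintype V] [DecidableEq V] (G : SimpleGraph V)
    [DecidableRel G.Adj] (wt : Sym2 V → ℝ) (m : ℕ) (v : V) (e : Sym2 V) : Prop :=
  e ∈ G.incidenceFinset v ∧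
  ((G.incidenceFinset v).filter (fun f => wt e < wt f)).card < m

/-- The set of weights of `k`-matchings of `G`. -/
def MatchWeights {V : Type*} (G : SimpleGraph V) (wt : Sym2 V → ℝ) (k : ℕ) : Set ℝ :=
  {x | ∃ M : Finset (Sym2 V), IsMatching G M ∧ M.card = k ∧ ∑ e ∈ M, wt e = x}

/- Auxiliary: the "heavier count" is strictly antitone in weight. -/
lemma count_anti {V : Type*} [Fintype V] [DecidableEq V] (G : SimpleGraph V)
    [DecidableRel G.Adj] (wt : Sym2 V → ℝ) (v : V) {e₁ e₂ : Sym2 V}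
    (_h1 : e₁ ∈ G.incidenceFinset v) (h2 : e₂ ∈ G.incidenceFinset v)
    (hlt : wt e₁ < wt e₂) :
    ((G.incidenceFinset v).filter (fun f => wt e₂ < wt f)).card <
      ((G.incidenceFinset v).filter (fun f => wt e₁ < wt f)).card := by
  apply Finset.card_lt_card
  constructor
  · intro f hf
    rw [Finset.mem_filter] at hf ⊢
    exact ⟨hf.1, hlt.trans hf.2⟩
  · intro hsub
    have : e₂ ∈ (G.incidenceFinset v).filter (fun f => wt e₂ < wt f) :=
      hsub (by rw [Finset.mem_filter]; exact ⟨h2, hlt⟩)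
    rw [Finset.mem_filter] at this
    exact lt_irrefl _ this.2

lemma incidence_eq_image {V : Type*} [Fintype V] [DecidableEq V] (G : SimpleGraph V)
    [DecidableRel G.Adj] (v : V) :
    G.incidenceFinset v = (G.neighborFinset v).image (fun u => s(v, u)) := by
  ext e
  rw [SimpleGraph.mem_incidenceFinset, Finset.mem_image]
  constructor
  · rintro ⟨he, hv⟩
    induction e with
    | _ a b =>
      rw [SimpleGraph.mem_edgeSet] at he
      rcases Sym2.mem_iff.mp hv with rfl | rfl
      · exact ⟨b, by simpa using he, rfl⟩
      · exact ⟨a, by simpa using he.symm, Sym2.eq_swap⟩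
  · rintro ⟨u, hu, rfl⟩
    rw [SimpleGraph.mem_neighborFinset] at hu
    exact ⟨hu, Sym2.mem_mk_left _ _⟩

/- Auxiliary: there are at least `m` edges among the `m` heaviest at `v`. -/
lemma heaviest_card {V : Type*} [Fintype V] [DecidableEq V] (G : SimpleGraph V)
    [DecidableRel G.Adj] (wt : Sym2 V → ℝ) (hwt : Set.InjOn wt G.edgeSet)
    (m : ℕ) (v : V) (hv : m ≤ G.degree v) :
    m ≤ ((G.incidenceFinset v).filter
        (fun e => ((G.incidenceFinset v).filter (fun f => wt e < wt f)).card < m)).card := by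
  classical
  set I := G.incidenceFinset v with hI
  set c : Sym2 V → ℕ := fun e => (I.filter (fun f => wt e < wt f)).card with hc
  have hIcard : I.card = G.degree v := G.card_incidenceFinset_eq_degree v
  have hIE : ∀ e ∈ I, e ∈ G.edgeSet := by
    intro e he
    rw [hI, SimpleGraph.mem_incidenceFinset] at he
    exact he.1
  have hB : (I.filter (fun e => ¬ c e < m)).card ≤ (Finset.Ico m I.card).card := by
    apply Finset.card_le_card_of_injOn c
    · intro e he
      rw [Finset.mem_coe, Finset.mem_filter] at he
      rw [Finset.mem_coe, Finset.mem_Ico]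
      refine ⟨not_lt.mp he.2, ?_⟩
      have hsub : I.filter (fun f => wt e < wt f) ⊆ I.erase e := by
        intro f hf
        rw [Finset.mem_filter] at hf
        rw [Finset.mem_erase]
        exact ⟨fun h => by subst h; exact lt_irrefl _ hf.2, hf.1⟩
      calc c e ≤ (I.erase e).card := Finset.card_le_card hsub
        _ < I.card := Finset.card_erase_lt_of_mem he.1
    · intro e₁ h₁ e₂ h₂ hceq
      rw [Finset.coe_filter, Set.mem_setOf_eq] at h₁ h₂
      by_contra hne
      have hwne : wt e₁ ≠ wt e₂ := fun h => hne (hwt (hIE _ h₁.1) (hIE _ h₂.1) h)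
      rcases lt_or_gt_of_ne hwne with h | h
      · exact absurd hceq (Nat.ne_of_gt (count_anti G wt v h₁.1 h₂.1 h))
      · exact absurd hceq.symm (Nat.ne_of_gt (count_anti G wt v h₂.1 h₁.1 h))
  have hpart := Finset.card_filter_add_card_filter_not
    (s := I) (p := fun e => c e < m)
  rw [Nat.card_Ico] at hB
  show m ≤ (I.filter (fun e => c e < m)).card
  omega

/-- Let `G` have pairwise distinct edge weights, `v` a vertex of degree at least `8k`,
and `G'` obtained from `G` by deleting all edges incident to `v` except the `8k` heaviest.
Then the maximum weight of a `k`-matching in `G'` equals that in `G`. -/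
theorem stmt_6 {V : Type*} [Fintype V] [DecidableEq V]
    (G G' : SimpleGraph V) [DecidableRel G.Adj] [DecidableRel G'.Adj]
    (wt : Sym2 V → ℝ) (hwt : Set.InjOn wt G.edgeSet)
    (k : ℕ) (v : V) (hv : 8 * k ≤ G.degree v)
    (hsub : G' ≤ G)
    (hG' : ∀ e ∈ G.edgeSet,
      (e ∈ G'.edgeSet ↔ (v ∉ e ∨ AmongHeaviest G wt (8 * k) v e))) :
    ∀ x : ℝ, IsGreatest (MatchWeights G' wt k) x ↔ IsGreatest (MatchWeights G wt k) x := by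
  classical
  -- MatchWeights G' ⊆ MatchWeights G
  have hsubW : MatchWeights G' wt k ⊆ MatchWeights G wt k := by
    rintro x ⟨M, ⟨hME, hMd⟩, hMc, rfl⟩
    exact ⟨M, ⟨fun e he => (SimpleGraph.edgeSet_mono hsub) (hME e he), hMd⟩, hMc, rfl⟩
  -- exchange: every weight in G is dominated by a weight in G'
  have hexch : ∀ x ∈ MatchWeights G wt k, ∃ y ∈ MatchWeights G' wt k, x ≤ y := by
    rintro x ⟨M, ⟨hME, hMd⟩, hMc, rfl⟩
    by_cases hall : ∀ e ∈ M, e ∈ G'.edgeSet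
    · exact ⟨_, ⟨M, ⟨hall, hMd⟩, hMc, rfl⟩, le_refl _⟩
    push_neg at hall
    obtain ⟨e, heM, heG'⟩ := hall
    have heG : e ∈ G.edgeSet := hME e heM
    have hve : v ∈ e ∧ ¬ AmongHeaviest G wt (8 * k) v e := by
      rw [hG' e heG] at heG'
      push_neg at heG'
      exact heG'
    have heI : e ∈ G.incidenceFinset v := by
      rw [SimpleGraph.mem_incidenceFinset]; exact ⟨heG, hve.1⟩
    have hce : 8 * k ≤ ((G.incidenceFinset v).filter (fun f => wt e < wt f)).card := by
      by_contra h
      exact hve.2 ⟨heI, not_le.mp (by simpa using h)⟩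
    have hk : 1 ≤ k := by
      rw [← hMc]; exact Finset.card_pos.mpr ⟨e, heM⟩
    -- good neighbors
    set U := (G.neighborFinset v).filter
      (fun u => AmongHeaviest G wt (8 * k) v s(v, u)) with hUdef
    have hUcard : 8 * k ≤ U.card := by
      have h1 := heaviest_card G wt hwt (8 * k) v hv
      have h2 : ((G.incidenceFinset v).filter
          (fun e => ((G.incidenceFinset v).filter (fun f => wt e < wt f)).card < 8 * k))
          = U.image (fun u => s(v, u)) := by
        rw [incidence_eq_image G v, Finset.filter_image, hUdef]
        congr 1
        apply Finset.filter_congr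
        intro u hu
        rw [SimpleGraph.mem_neighborFinset] at hu
        unfold AmongHeaviest
        constructor
        · intro h
          rw [← incidence_eq_image G v] at h
          refine ⟨?_, h⟩
          rw [SimpleGraph.mem_incidenceFinset]
          exact ⟨by simpa using hu, Sym2.mem_mk_left _ _⟩
        · intro h
          rw [← incidence_eq_image G v]
          exact h.2
      rw [h2, Finset.card_image_of_injective _ (fun a b h => Sym2.congr_right.mp h)] at h1
      exact h1
    -- covered vertices
    set C := (M.erase e).biUnion (fun g => Finset.univ.filter (· ∈ g)) with hCdef
    have hCcard : C.card ≤ 2 * (k - 1) := by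
      calc C.card ≤ ∑ g ∈ M.erase e, (Finset.univ.filter (· ∈ g)).card :=
            Finset.card_biUnion_le
        _ ≤ ∑ _g ∈ M.erase e, 2 := by
            apply Finset.sum_le_sum
            intro g _
            induction g with
            | _ a b =>
              have : Finset.univ.filter (· ∈ s(a, b)) ⊆ {a, b} := by
                intro w hw
                rw [Finset.mem_filter] at hw
                rcases Sym2.mem_iff.mp hw.2 with rfl | rfl <;> simp
              calc _ ≤ ({a, b} : Finset V).card := Finset.card_le_card this
                _ ≤ 2 := Finset.card_insert_le _ _ |>.trans (by simp)
        _ = 2 * (k - 1) := by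
            rw [Finset.sum_const, Finset.card_erase_of_mem heM, hMc, smul_eq_mul]
            ring
    obtain ⟨u, huU, huC⟩ : ∃ u ∈ U, u ∉ C := by
      by_contra h
      push_neg at h
      have := Finset.card_le_card h
      omega
    rw [hUdef, Finset.mem_filter, SimpleGraph.mem_neighborFinset] at huU
    obtain ⟨hadj, hAm⟩ := huU
    have hfG : s(v, u) ∈ G.edgeSet := by rwa [SimpleGraph.mem_edgeSet]
    have hfG' : s(v, u) ∈ G'.edgeSet := (hG' s(v, u) hfG).mpr (Or.inr hAm)
    have hwef : wt e < wt s(v, u) := by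
      have hfI : s(v, u) ∈ G.incidenceFinset v := hAm.1
      have hne : e ≠ s(v, u) := fun h => heG' (h ▸ hfG')
      have hwne : wt e ≠ wt s(v, u) := fun h => hne (hwt heG hfG h)
      rcases lt_or_gt_of_ne hwne with h | h
      · exact h
      · exfalso
        have := count_anti G wt v hfI heI h
        have := hAm.2
        omega
    -- v, u are not in any edge of M.erase e
    have hvnot : ∀ g ∈ M.erase e, v ∉ g := by
      intro g hg
      rw [Finset.mem_erase] at hg
      exact hMd e heM g hg.2 (Ne.symm hg.1) v hve.1
    have hunot : ∀ g ∈ M.erase e, u ∉ g := by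
      intro g hg hug
      exact huC (Finset.mem_biUnion.mpr ⟨g, hg, Finset.mem_filter.mpr ⟨Finset.mem_univ u, hug⟩⟩)
    have hfnot : s(v, u) ∉ M.erase e := fun h => hvnot s(v, u) h (Sym2.mem_mk_left _ _)
    refine ⟨∑ g ∈ insert s(v, u) (M.erase e), wt g, ⟨insert s(v, u) (M.erase e), ⟨?_, ?_⟩, ?_, rfl⟩, ?_⟩
    · intro g hg
      rcases Finset.mem_insert.mp hg with rfl | hg
      · exact hfG'
      · rw [Finset.mem_erase] at hg
        exact (hG' g (hME g hg.2)).mpr (Or.inl (hvnot g (Finset.mem_erase.mpr hg)))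
    · intro g hg h hh hgh w hwg hwh
      rcases Finset.mem_insert.mp hg with hgf | hg' <;>
        rcases Finset.mem_insert.mp hh with hhf | hh'
      · exact hgh (hgf.trans hhf.symm)
      · subst hgf
        rcases Sym2.mem_iff.mp hwg with rfl | rfl
        · exact hvnot h hh' hwh
        · exact hunot h hh' hwh
      · subst hhf
        rcases Sym2.mem_iff.mp hwh with rfl | rfl
        · exact hvnot g hg' hwg
        · exact hunot g hg' hwg
      · exact hMd g (Finset.mem_erase.mp hg').2 h (Finset.mem_erase.mp hh').2 hgh w hwg hwh
    · rw [Finset.card_insert_of_notMem hfnot, Finset.card_erase_of_mem heM, hMc]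
      omega
    · rw [Finset.sum_insert hfnot]
      have := Finset.sum_erase_add M wt heM
      linarith
  intro x
  constructor
  · rintro ⟨hx, hub⟩
    refine ⟨hsubW hx, ?_⟩
    intro z hz
    obtain ⟨y, hy, hzy⟩ := hexch z hz
    exact hzy.trans (hub hy)
  · rintro ⟨hx, hub⟩
    obtain ⟨y, hy, hxy⟩ := hexch x hx
    have hyx : y ≤ x := hub (hsubW hy)
    have : y = x := le_antisymm hyx hxy
    refine ⟨this ▸ hy, fun z hz => hub (hsubW hz)⟩
end

section
/- Let G be a weighted graph with pairwise distinct edge weights and let G_T (the trimmed subgraph) consist of those edges e = [v,w] such that e is among the 8k heaviest edges incident to v and among the 8k heaviest edges incident to w. Then a maximum-weight k-matching in G_T is also a maximum-weight k-matching in G. -/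
open SimpleGraph Finset

lemma swap_lemma {V : Type*} [Fintype V] [DecidableEq V] (G : SimpleGraph V)
    [DecidableRel G.Adj] (wt : Sym2 V → ℝ) (k : ℕ) (N : Finset (Sym2 V))
    (hN : IsMatching G N) (hNk : N.card = k) (e : Sym2 V) (he : e ∈ N)
    (v : V) (hve : v ∈ e)
    (hbad : 8 * k ≤ ((G.incidenceFinset v).filter (fun f => wt e < wt f)).card) :
    ∃ N', IsMatching G N' ∧ N'.card = k ∧ ∑ x ∈ N, wt x < ∑ x ∈ N', wt x := by
  classical
  have hk1 : 1 ≤ k := by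
    rw [← hNk]; exact Finset.card_pos.2 ⟨e, he⟩
  set F := (G.incidenceFinset v).filter (fun f => wt e < wt f) with hF
  -- matched vertices
  set Vm : Finset V := univ.filter (fun x => ∃ g ∈ N, x ∈ g) with hVm
  have hVmcard : Vm.card ≤ 2 * k := by
    have hsub : Vm ⊆ N.biUnion (fun g => univ.filter (· ∈ g)) := by
      intro x hx
      rw [hVm, mem_filter] at hx
      obtain ⟨-, g, hg, hxg⟩ := hx
      exact Finset.mem_biUnion.2 ⟨g, hg, by simp [hxg]⟩
    calc Vm.card ≤ (N.biUnion (fun g => univ.filter (· ∈ g))).card := Finset.card_le_card hsub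
      _ ≤ ∑ g ∈ N, (univ.filter (· ∈ g)).card := Finset.card_biUnion_le
      _ ≤ ∑ _g ∈ N, 2 := by
          refine Finset.sum_le_sum fun g _ => ?_
          induction g using Sym2.ind with
          | _ a b =>
            refine le_trans (Finset.card_le_card fun x hx => ?_) (Finset.card_insert_le a {b})
            simp only [mem_filter, Sym2.mem_iff] at hx
            simp [hx.2]
      _ = 2 * k := by rw [Finset.sum_const, hNk, smul_eq_mul, mul_comm]
  -- the "other endpoint" map
  set ψ : Sym2 V → V := fun f => if h : v ∈ f then Sym2.Mem.other' h else v with hψ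
  have hψspec : ∀ f ∈ F, s(v, ψ f) = f := by
    intro f hf
    rw [hF, mem_filter, mem_incidenceFinset] at hf
    have hv : v ∈ f := hf.1.2
    rw [hψ]; simp only [dif_pos hv]; exact Sym2.other_spec' hv
  -- find a heavier edge with free other endpoint
  have hexf : ∃ f ∈ F, ψ f ∉ Vm := by
    by_contra hcon
    push_neg at hcon
    have hinj : Set.InjOn ψ F := by
      intro a ha b hb hab
      rw [← hψspec a ha, ← hψspec b hb, hab]
    have := Finset.card_le_card_of_injOn ψ hcon hinj
    omega
  obtain ⟨f, hfF, hfw⟩ := hexf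
  have hfeq : s(v, ψ f) = f := hψspec f hfF
  rw [hF, mem_filter, mem_incidenceFinset] at hfF
  have hfG : f ∈ G.edgeSet := hfF.1.1
  have hlt : wt e < wt f := hfF.2
  have hwfree : ∀ g ∈ N, ψ f ∉ g := by
    intro g hg hmem
    exact hfw (by rw [hVm, mem_filter]; exact ⟨mem_univ _, g, hg, hmem⟩)
  have hmemf : ∀ x ∈ f, x = v ∨ x = ψ f := by
    intro x hx
    rw [← hfeq, Sym2.mem_iff] at hx
    exact hx
  have hfN : f ∉ N := by
    intro hfN
    rcases eq_or_ne e f with rfl | hne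
    · exact lt_irrefl _ hlt
    · exact hN.2 e he f hfN hne v hve (hfeq ▸ Sym2.mem_mk_left v (ψ f))
  have hfNe : f ∉ N.erase e := fun h => hfN (Finset.mem_of_mem_erase h)
  refine ⟨insert f (N.erase e), ⟨?_, ?_⟩, ?_, ?_⟩
  · intro g hg
    rcases Finset.mem_insert.1 hg with rfl | hg
    · exact hfG
    · exact hN.1 g (Finset.mem_of_mem_erase hg)
  · intro g hg g' hg' hne x hxg
    rcases Finset.mem_insert.1 hg with hgf | hgN
    · rcases Finset.mem_insert.1 hg' with hg'f | hg'N
      · exact absurd (hgf.trans hg'f.symm) hne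
      · -- g = f, g' ∈ erase e
        have hg'e : g' ≠ e := Finset.ne_of_mem_erase hg'N
        have hg'N' : g' ∈ N := Finset.mem_of_mem_erase hg'N
        rcases hmemf x (hgf ▸ hxg) with rfl | rfl
        · exact hN.2 e he g' hg'N' (Ne.symm hg'e) x hve
        · exact hwfree g' hg'N'
    · rcases Finset.mem_insert.1 hg' with hg'f | hg'N
      · -- g' = f
        have hge : g ≠ e := Finset.ne_of_mem_erase hgN
        have hgN' : g ∈ N := Finset.mem_of_mem_erase hgN
        rw [hg'f]
        intro hxf
        rcases hmemf x hxf with rfl | rfl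
        · exact hN.2 e he g hgN' (Ne.symm hge) x hve hxg
        · exact hwfree g hgN' hxg
      · exact hN.2 g (Finset.mem_of_mem_erase hgN) g' (Finset.mem_of_mem_erase hg'N) hne x hxg
  · rw [Finset.card_insert_of_notMem hfNe, Finset.card_erase_of_mem he, hNk]
    omega
  · rw [Finset.sum_insert hfNe, ← Finset.add_sum_erase N wt he]
    exact add_lt_add_left hlt _

/-- Let `G` have pairwise distinct edge weights and `GT` be the trimmed subgraph of `G`,
consisting of the edges that are among the `8k` heaviest at both of their endpoints.
If `G` has a `k`-matching, then a maximum-weight `k`-matching in `GT` is also a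
maximum-weight `k`-matching in `G`. -/
theorem stmt_7 {V : Type*} [Fintype V] [DecidableEq V]
    (G GT : SimpleGraph V) [DecidableRel G.Adj] [DecidableRel GT.Adj]
    (wt : Sym2 V → ℝ) (hwt : Set.InjOn wt G.edgeSet) (k : ℕ)
    (hsub : GT ≤ G)
    (hGT : ∀ e ∈ G.edgeSet,
      (e ∈ GT.edgeSet ↔ ∀ v : V, v ∈ e → AmongHeaviest G wt (8 * k) v e))
    (hex : ∃ M : Finset (Sym2 V), IsMatching G M ∧ M.card = k)
    (M : Finset (Sym2 V)) (hM : IsMatching GT M) (hMk : M.card = k)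
    (hMmax : ∀ M' : Finset (Sym2 V), IsMatching GT M' → M'.card = k →
      ∑ e ∈ M', wt e ≤ ∑ e ∈ M, wt e) :
    IsMatching G M ∧
    ∀ M' : Finset (Sym2 V), IsMatching G M' → M'.card = k →
      ∑ e ∈ M', wt e ≤ ∑ e ∈ M, wt e := by
  classical
  have hMG : IsMatching G M :=
    ⟨fun e he => SimpleGraph.edgeSet_mono hsub (hM.1 e he), hM.2⟩
  refine ⟨hMG, ?_⟩
  -- the finset of k-matchings of G
  set S : Finset (Finset (Sym2 V)) :=
    G.edgeFinset.powerset.filter (fun N => IsMatching G N ∧ N.card = k) with hS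
  have hmemS : ∀ N : Finset (Sym2 V), N ∈ S ↔ IsMatching G N ∧ N.card = k := by
    intro N
    rw [hS, mem_filter, Finset.mem_powerset]
    constructor
    · exact fun h => h.2
    · exact fun h => ⟨fun e he => SimpleGraph.mem_edgeFinset.2 (h.1.1 e he), h⟩
  obtain ⟨M₀, hM₀, hM₀k⟩ := hex
  have hSne : S.Nonempty := ⟨M₀, (hmemS M₀).2 ⟨hM₀, hM₀k⟩⟩
  obtain ⟨Mx, hMxS, hMxmax⟩ := S.exists_max_image (fun N => ∑ x ∈ N, wt x) hSne
  obtain ⟨hMx, hMxk⟩ := (hmemS Mx).1 hMxS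
  -- Mx is a matching in GT
  have hMxGT : IsMatching GT Mx := by
    refine ⟨fun e he => ?_, hMx.2⟩
    have heG : e ∈ G.edgeSet := hMx.1 e he
    rw [hGT e heG]
    intro v hv
    refine ⟨(G.mem_incidenceFinset v e).2 ⟨heG, hv⟩, ?_⟩
    by_contra hcon
    push_neg at hcon
    obtain ⟨N', hN', hN'k, hN'gt⟩ :=
      swap_lemma G wt k Mx hMx hMxk e he v hv hcon
    exact absurd (hMxmax N' ((hmemS N').2 ⟨hN', hN'k⟩)) (not_le.2 hN'gt)
  intro M' hM' hM'k
  calc ∑ e ∈ M', wt e ≤ ∑ e ∈ Mx, wt e := hMxmax M' ((hmemS M').2 ⟨hM', hM'k⟩)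
    _ ≤ ∑ e ∈ M, wt e := hMmax Mx hMxGT hMxk
end

section
/- Let G_T be a weighted graph in which every vertex has degree at most 8k and all edge weights are distinct, and let G_R be the subgraph consisting of the k(16k-1) heaviest edges of G_T (assuming G_T has at least that many edges). Then a maximum-weight k-matching in G_R is also a maximum-weight k-matching in G_T. -/
open SimpleGraph Finset

/-- Greedy extension: any matching of size `≤ k` in a graph with `k(16k-1)` edges
and max degree `≤ 8k` extends to a matching of size `k`. -/
lemma extend_matching {V : Type*} [Fintype V] [DecidableEq V]
    (GR : SimpleGraph V) [DecidableRel GR.Adj] (k : ℕ)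
    (hdeg : ∀ v : V, GR.degree v ≤ 8 * k)
    (hcard : GR.edgeFinset.card = k * (16 * k - 1)) :
    ∀ n (A : Finset (Sym2 V)), IsMatching GR A → A.card + n = k →
      ∃ A'' : Finset (Sym2 V), A ⊆ A'' ∧ IsMatching GR A'' ∧ A''.card = k := by
  intro n
  induction n with
  | zero => intro A hA hAc; exact ⟨A, subset_rfl, hA, by omega⟩
  | succ n ih =>
    intro A hA hAc
    classical
    set Bad : Finset (Sym2 V) :=
      GR.edgeFinset.filter (fun e => ∃ a ∈ A, ∃ v, v ∈ a ∧ v ∈ e) with hBad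
    have hAsub : A ⊆ GR.edgeFinset := fun e he => by
      rw [mem_edgeFinset]; exact hA.1 e he
    -- each a kills at most 16k-1 edges
    have hkill : ∀ a ∈ A,
        (GR.edgeFinset.filter (fun e => ∃ v, v ∈ a ∧ v ∈ e)).card ≤ 16 * k - 1 := by
      intro a ha
      induction a using Sym2.ind with
      | _ x y =>
        have haE : s(x, y) ∈ GR.edgeFinset := hAsub ha
        have hsub2 : GR.edgeFinset.filter (fun e => ∃ v, v ∈ s(x, y) ∧ v ∈ e)
            ⊆ GR.incidenceFinset x ∪ GR.incidenceFinset y := by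
          intro e he
          rw [mem_filter] at he
          obtain ⟨heE, v, hv1, hv2⟩ := he
          rw [Sym2.mem_iff] at hv1
          rcases hv1 with rfl | rfl
          · exact mem_union_left _ (by
              rw [mem_incidenceFinset]
              exact ⟨(mem_edgeFinset).mp heE, hv2⟩)
          · exact mem_union_right _ (by
              rw [mem_incidenceFinset]
              exact ⟨(mem_edgeFinset).mp heE, hv2⟩)
        have hinx : s(x, y) ∈ GR.incidenceFinset x := by
          rw [mem_incidenceFinset]
          exact ⟨(mem_edgeFinset).mp haE, Sym2.mem_mk_left x y⟩
        have hiny : s(x, y) ∈ GR.incidenceFinset y := by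
          rw [mem_incidenceFinset]
          exact ⟨(mem_edgeFinset).mp haE, Sym2.mem_mk_right x y⟩
        have hinter : 1 ≤ (GR.incidenceFinset x ∩ GR.incidenceFinset y).card :=
          card_pos.mpr ⟨s(x, y), mem_inter.mpr ⟨hinx, hiny⟩⟩
        have hun := card_union_add_card_inter (GR.incidenceFinset x) (GR.incidenceFinset y)
        have hdx : (GR.incidenceFinset x).card ≤ 8 * k := by
          rw [card_incidenceFinset_eq_degree]; exact hdeg x
        have hdy : (GR.incidenceFinset y).card ≤ 8 * k := by
          rw [card_incidenceFinset_eq_degree]; exact hdeg y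
        have := card_le_card hsub2
        omega
    have hBadcard : Bad.card ≤ A.card * (16 * k - 1) := by
      have h1 : Bad ⊆ A.biUnion (fun a => GR.edgeFinset.filter (fun e => ∃ v, v ∈ a ∧ v ∈ e)) := by
        intro e he
        rw [hBad, mem_filter] at he
        obtain ⟨heE, a, ha, v, hv1, hv2⟩ := he
        exact mem_biUnion.mpr ⟨a, ha, mem_filter.mpr ⟨heE, v, hv1, hv2⟩⟩
      calc Bad.card ≤ _ := card_le_card h1
        _ ≤ ∑ a ∈ A, (GR.edgeFinset.filter (fun e => ∃ v, v ∈ a ∧ v ∈ e)).card :=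
            card_biUnion_le
        _ ≤ ∑ _a ∈ A, (16 * k - 1) := sum_le_sum hkill
        _ = A.card * (16 * k - 1) := by rw [sum_const, smul_eq_mul]
    have hlt : Bad.card < GR.edgeFinset.card := by
      have hk : 1 ≤ k := by omega
      have : A.card * (16 * k - 1) < k * (16 * k - 1) := by
        apply Nat.mul_lt_mul_of_lt_of_le (by omega) (le_refl _) (by omega)
      omega
    have hss : Bad ⊂ GR.edgeFinset :=
      (filter_subset _ _).ssubset_of_ne (fun h => by
        rw [hBad, h] at hlt; omega)
    obtain ⟨e, heE, heB⟩ := exists_of_ssubset hss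
    have hnotouch : ∀ a ∈ A, ∀ v, v ∈ a → v ∉ e := by
      intro a ha v hv1 hv2
      exact heB (mem_filter.mpr ⟨heE, a, ha, v, hv1, hv2⟩)
    have heA : e ∉ A := by
      intro h
      exact hnotouch e h e.out.1 (Sym2.out_fst_mem e) (Sym2.out_fst_mem e)
    have hins : IsMatching GR (insert e A) := by
      constructor
      · intro f hf
        rcases mem_insert.mp hf with rfl | hf
        · exact (mem_edgeFinset).mp heE
        · exact hA.1 f hf
      · intro f hf g hg hfg v hvf hvg
        rcases mem_insert.mp hf with hf' | hf' <;> rcases mem_insert.mp hg with hg' | hg'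
        · exact hfg (hf'.trans hg'.symm)
        · exact hnotouch g hg' v hvg (hf' ▸ hvf)
        · exact hnotouch f hf' v hvf (hg' ▸ hvg)
        · exact hA.2 f hf' g hg' hfg v hvf hvg
    obtain ⟨A'', hsub'', hM'', hc''⟩ := ih (insert e A) hins (by
      rw [card_insert_of_notMem heA]; omega)
    exact ⟨A'', fun a ha => hsub'' (mem_insert_of_mem ha), hM'', hc''⟩

/-- Let `GT` be a weighted graph of maximum degree at most `8k` with pairwise distinct
edge weights, and let `GR` be the subgraph consisting of the `k(16k-1)` heaviest edges
of `GT`. Then a maximum-weight `k`-matching in `GR` is also a maximum-weight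
`k`-matching in `GT`. -/
theorem stmt_8 {V : Type*} [Fintype V] [DecidableEq V]
    (GT GR : SimpleGraph V) [DecidableRel GT.Adj] [DecidableRel GR.Adj]
    (wt : Sym2 V → ℝ) (hwt : Set.InjOn wt GT.edgeSet) (k : ℕ)
    (hdeg : ∀ v : V, GT.degree v ≤ 8 * k)
    (hsub : GR ≤ GT)
    (hcard : GR.edgeFinset.card = k * (16 * k - 1))
    (hheaviest : ∀ e ∈ GT.edgeFinset, e ∉ GR.edgeFinset →
      ∀ f ∈ GR.edgeFinset, wt e < wt f)
    (M : Finset (Sym2 V)) (hM : IsMatching GR M) (hMk : M.card = k)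
    (hMmax : ∀ M' : Finset (Sym2 V), IsMatching GR M' → M'.card = k →
      ∑ e ∈ M', wt e ≤ ∑ e ∈ M, wt e) :
    IsMatching GT M ∧
    ∀ M' : Finset (Sym2 V), IsMatching GT M' → M'.card = k →
      ∑ e ∈ M', wt e ≤ ∑ e ∈ M, wt e := by
  classical
  have hdegR : ∀ v : V, GR.degree v ≤ 8 * k := by
    intro v
    refine le_trans ?_ (hdeg v)
    apply card_le_card
    intro u hu
    rw [mem_neighborFinset] at hu ⊢
    exact hsub hu
  constructor
  · exact ⟨fun e he => edgeSet_mono hsub (hM.1 e he), hM.2⟩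
  · intro M' hM' hM'k
    set A : Finset (Sym2 V) := M'.filter (fun e => e ∈ GR.edgeFinset) with hAdef
    set B : Finset (Sym2 V) := M'.filter (fun e => e ∉ GR.edgeFinset) with hBdef
    have hsumsplit : ∑ e ∈ A, wt e + ∑ e ∈ B, wt e = ∑ e ∈ M', wt e :=
      sum_filter_add_sum_filter_not M' _ wt
    have hcardsplit : A.card + B.card = k := by
      rw [hAdef, hBdef, card_filter_add_card_filter_not, hM'k]
    have hAmatch : IsMatching GR A := by
      constructor
      · intro e he
        exact (mem_edgeFinset).mp (mem_filter.mp he).2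
      · intro e he f hf hef v hv
        exact hM'.2 e (mem_filter.mp he).1 f (mem_filter.mp hf).1 hef v hv
    obtain ⟨A'', hAsub, hA''match, hA''card⟩ :=
      extend_matching GR k hdegR hcard B.card A hAmatch hcardsplit
    set C : Finset (Sym2 V) := A'' \ A with hCdef
    have hCcard : C.card = B.card := by
      rw [hCdef, card_sdiff_of_subset hAsub]; omega
    have hBC : B.card = C.card := hCcard.symm
    have hlt : ∀ b ∈ B, ∀ c ∈ C, wt b < wt c := by
      intro b hb c hc
      have hb1 := mem_filter.mp hb
      have hbT : b ∈ GT.edgeFinset := (mem_edgeFinset).mpr (hM'.1 b hb1.1)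
      have hcR : c ∈ GR.edgeFinset :=
        (mem_edgeFinset).mpr (hA''match.1 c (mem_sdiff.mp hc).1)
      exact hheaviest b hbT hb1.2 c hcR
    have hsumBC : ∑ e ∈ B, wt e ≤ ∑ e ∈ C, wt e := by
      rcases B.eq_empty_or_nonempty with hBe | hBne
      · have hCe : C = ∅ := card_eq_zero.mp (by rw [hCcard, hBe]; simp)
        rw [hBe, hCe]
      · let eqv := Finset.equivOfCardEq hBC
        calc ∑ e ∈ B, wt e = ∑ x : B, wt x.1 := (sum_coe_sort B wt).symm
          _ ≤ ∑ x : B, wt (eqv x).1 := by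
              apply sum_le_sum
              intro x _
              exact le_of_lt (hlt x.1 x.2 (eqv x).1 (eqv x).2)
          _ = ∑ y : C, wt y.1 := Equiv.sum_comp eqv (fun y => wt y.1)
          _ = ∑ e ∈ C, wt e := sum_coe_sort C wt
    have hsumA'' : ∑ e ∈ A'', wt e = ∑ e ∈ A, wt e + ∑ e ∈ C, wt e := by
      rw [hCdef, ← sum_sdiff hAsub]; ring
    have hfinal := hMmax A'' hA''match hA''card
    linarith
end

section
/- Let M_k and M_{k+1} be a maximum-weight k-matching and a maximum-weight (k+1)-matching in a weighted graph G, and let C be the union of all connected components of M_k ⊕ M_{k+1} except one component that is an augmenting path relative to M_k. Then wt(C ∩ M_k) = wt(C ∩ M_{k+1}). -/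
open SimpleGraph Finset
open scoped symmDiff

/-- `p` is an augmenting path relative to the matching `M`. -/
def IsAugPath {V : Type*} (G : SimpleGraph V) (M : Finset (Sym2 V))
    {u v : V} (p : G.Walk u v) : Prop :=
  p.IsPath ∧ ¬ (∃ e ∈ M, u ∈ e) ∧ ¬ (∃ e ∈ M, v ∈ e) ∧
  Odd p.edges.length ∧
  ∀ (i : ℕ) (h : i < p.edges.length), (p.edges.get ⟨i, h⟩ ∈ M ↔ Odd i)

private lemma aux_card_range_filter_odd (n : ℕ) :
    ((Finset.range n).filter (fun i => Odd i)).card = n / 2 := by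
  induction n with
  | zero => simp
  | succ n ih =>
    rw [Finset.range_add_one, Finset.filter_insert]
    by_cases h : Odd n
    · rw [if_pos h, Finset.card_insert_of_notMem (by simp), ih]
      obtain ⟨j, hj⟩ := h; omega
    · rw [if_neg h, ih]
      rw [Nat.not_odd_iff_even] at h
      obtain ⟨j, hj⟩ := h; omega

private lemma aux_mem_support_of_mem_edges {V : Type*} {G : SimpleGraph V} {u v w : V}
    {p : G.Walk u v} {e : Sym2 V} (he : e ∈ p.edges) (hw : w ∈ e) : w ∈ p.support := by
  induction e with
  | _ a b =>
    rcases Sym2.mem_iff.mp hw with rfl | rfl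
    · exact p.fst_mem_support_of_mem_edges he
    · exact p.snd_mem_support_of_mem_edges he

/-- Let `Mk` be a maximum-weight `k`-matching and `Mk1` a maximum-weight
`(k+1)`-matching of `G`, and let `p` be a connected component of `Mk ∆ Mk1` that is
an augmenting path relative to `Mk`. Let `C` be the union of the remaining components,
i.e. `C = (Mk ∆ Mk1) \ p.edges`. Then `wt(C ∩ Mk) = wt(C ∩ Mk1)`. -/
theorem stmt_12 {V : Type*} [DecidableEq V] (G : SimpleGraph V) (wt : Sym2 V → ℝ)
    (k : ℕ) (Mk Mk1 : Finset (Sym2 V))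
    (hMk : IsMatching G Mk) (hMkcard : Mk.card = k)
    (hMkmax : ∀ M' : Finset (Sym2 V), IsMatching G M' → M'.card = k →
      ∑ e ∈ M', wt e ≤ ∑ e ∈ Mk, wt e)
    (hMk1 : IsMatching G Mk1) (hMk1card : Mk1.card = k + 1)
    (hMk1max : ∀ M' : Finset (Sym2 V), IsMatching G M' → M'.card = k + 1 →
      ∑ e ∈ M', wt e ≤ ∑ e ∈ Mk1, wt e)
    {u v : V} (p : G.Walk u v) (hp : IsAugPath G Mk p)
    (hpsub : p.edges.toFinset ⊆ Mk ∆ Mk1)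
    (hpcomp : ∀ e ∈ Mk ∆ Mk1, (∃ x ∈ p.support, x ∈ e) → e ∈ p.edges) :
    ∑ e ∈ ((Mk ∆ Mk1) \ p.edges.toFinset) ∩ Mk, wt e =
    ∑ e ∈ ((Mk ∆ Mk1) \ p.edges.toFinset) ∩ Mk1, wt e := by
  classical
  set D : Finset (Sym2 V) := Mk ∆ Mk1 with hD
  set P : Finset (Sym2 V) := p.edges.toFinset with hPdef
  set A : Finset (Sym2 V) := (D \ P) ∩ Mk with hAdef
  set B : Finset (Sym2 V) := (D \ P) ∩ Mk1 with hBdef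
  have hmemD : ∀ e, e ∈ D ↔ (e ∈ Mk ∧ e ∉ Mk1) ∨ (e ∈ Mk1 ∧ e ∉ Mk) := by
    intro e; rw [hD, Finset.mem_symmDiff]
  -- membership facts
  have hAsub : A ⊆ Mk := Finset.inter_subset_right
  have hBsub : B ⊆ Mk1 := Finset.inter_subset_right
  have hAnotMk1 : ∀ e ∈ A, e ∉ Mk1 := by
    intro e he
    have h1 := (Finset.mem_sdiff.mp (Finset.mem_inter.mp he).1).1
    have h2 := (Finset.mem_inter.mp he).2
    rcases (hmemD e).mp h1 with ⟨_, h⟩ | ⟨_, h⟩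
    · exact h
    · exact absurd h2 h
  have hBnotMk : ∀ e ∈ B, e ∉ Mk := by
    intro e he
    have h1 := (Finset.mem_sdiff.mp (Finset.mem_inter.mp he).1).1
    have h2 := (Finset.mem_inter.mp he).2
    rcases (hmemD e).mp h1 with ⟨_, h⟩ | ⟨_, h⟩
    · exact absurd h2 h
    · exact h
  -- key cross fact: an edge of the path shares no vertex with an edge of D \ P
  have hcross : ∀ e ∈ P, ∀ f ∈ D \ P, ∀ w : V, w ∈ e → w ∉ f := by
    intro e he f hf w hwe hwf
    have hwsup : w ∈ p.support :=
      aux_mem_support_of_mem_edges (List.mem_toFinset.mp he) hwe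
    have hfP : f ∈ p.edges := hpcomp f (Finset.mem_sdiff.mp hf).1 ⟨w, hwsup, hwf⟩
    exact (Finset.mem_sdiff.mp hf).2 (List.mem_toFinset.mpr hfP)
  -- cross disjointness for the swapped matchings
  have keyA : ∀ e ∈ Mk \ A, ∀ f ∈ B, ∀ w : V, w ∈ e → w ∉ f := by
    intro e he f hf w hwe hwf
    obtain ⟨heMk, heA⟩ := Finset.mem_sdiff.mp he
    by_cases heMk1 : e ∈ Mk1
    · have hne : e ≠ f := fun h => hBnotMk f hf (h ▸ heMk)
      exact hMk1.2 e heMk1 f (hBsub hf) hne w hwe hwf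
    · have heD : e ∈ D := (hmemD e).mpr (Or.inl ⟨heMk, heMk1⟩)
      have heP : e ∈ P := by
        by_contra hnP
        exact heA (Finset.mem_inter.mpr ⟨Finset.mem_sdiff.mpr ⟨heD, hnP⟩, heMk⟩)
      have hfDP : f ∈ D \ P := (Finset.mem_inter.mp hf).1
      exact hcross e heP f hfDP w hwe hwf
  have keyB : ∀ e ∈ Mk1 \ B, ∀ f ∈ A, ∀ w : V, w ∈ e → w ∉ f := by
    intro e he f hf w hwe hwf
    obtain ⟨heMk1, heB⟩ := Finset.mem_sdiff.mp he
    by_cases heMk : e ∈ Mk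
    · have hne : e ≠ f := fun h => hAnotMk1 f hf (h ▸ heMk1)
      exact hMk.2 e heMk f (hAsub hf) hne w hwe hwf
    · have heD : e ∈ D := (hmemD e).mpr (Or.inr ⟨heMk1, heMk⟩)
      have heP : e ∈ P := by
        by_contra hnP
        exact heB (Finset.mem_inter.mpr ⟨Finset.mem_sdiff.mpr ⟨heD, hnP⟩, heMk1⟩)
      have hfDP : f ∈ D \ P := (Finset.mem_inter.mp hf).1
      exact hcross e heP f hfDP w hwe hwf
  -- the swapped sets are matchings
  have hMk' : IsMatching G ((Mk \ A) ∪ B) := by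
    constructor
    · intro e he
      rcases Finset.mem_union.mp he with h | h
      · exact hMk.1 e (Finset.mem_sdiff.mp h).1
      · exact hMk1.1 e (hBsub h)
    · intro e he f hf hne w hwe hwf
      rcases Finset.mem_union.mp he with he' | he' <;>
        rcases Finset.mem_union.mp hf with hf' | hf'
      · exact hMk.2 e (Finset.mem_sdiff.mp he').1 f (Finset.mem_sdiff.mp hf').1 hne w hwe hwf
      · exact keyA e he' f hf' w hwe hwf
      · exact keyA f hf' e he' w hwf hwe
      · exact hMk1.2 e (hBsub he') f (hBsub hf') hne w hwe hwf
  have hMk1' : IsMatching G ((Mk1 \ B) ∪ A) := by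
    constructor
    · intro e he
      rcases Finset.mem_union.mp he with h | h
      · exact hMk1.1 e (Finset.mem_sdiff.mp h).1
      · exact hMk.1 e (hAsub h)
    · intro e he f hf hne w hwe hwf
      rcases Finset.mem_union.mp he with he' | he' <;>
        rcases Finset.mem_union.mp hf with hf' | hf'
      · exact hMk1.2 e (Finset.mem_sdiff.mp he').1 f (Finset.mem_sdiff.mp hf').1 hne w hwe hwf
      · exact keyB e he' f hf' w hwe hwf
      · exact keyB f hf' e he' w hwf hwe
      · exact hMk.2 e (hAsub he') f (hAsub hf') hne w hwe hwf
  -- cardinalities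
  have hnodup : p.edges.Nodup := hp.1.edges_nodup
  have hPcard : P.card = p.edges.length := List.toFinset_card_of_nodup hnodup
  have hPMkcard : (P ∩ Mk).card = p.edges.length / 2 := by
    rw [← aux_card_range_filter_odd p.edges.length]
    symm
    apply Finset.card_bij (fun i hi => p.edges.get
      ⟨i, (Finset.mem_range.mp (Finset.mem_filter.mp hi).1)⟩)
    · intro i hi
      obtain ⟨hir, hio⟩ := Finset.mem_filter.mp hi
      refine Finset.mem_inter.mpr ⟨List.mem_toFinset.mpr (p.edges.get_mem _), ?_⟩
      exact (hp.2.2.2.2 i (Finset.mem_range.mp hir)).mpr hio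
    · intro i hi j hj hij
      exact congrArg Fin.val ((List.Nodup.get_inj_iff hnodup).mp hij)
    · intro e he
      obtain ⟨heP, heMk⟩ := Finset.mem_inter.mp he
      obtain ⟨⟨i, hilt⟩, hi⟩ := List.mem_iff_get.mp (List.mem_toFinset.mp heP)
      have hodd : Odd i := (hp.2.2.2.2 i hilt).mp (hi ▸ heMk)
      exact ⟨i, Finset.mem_filter.mpr ⟨Finset.mem_range.mpr hilt, hodd⟩, hi⟩
  have hPMk1 : P ∩ Mk1 = P \ (P ∩ Mk) := by
    ext e
    simp only [Finset.mem_inter, Finset.mem_sdiff]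
    constructor
    · rintro ⟨heP, heMk1⟩
      refine ⟨heP, fun h => ?_⟩
      rcases (hmemD e).mp (hpsub heP) with ⟨_, h1⟩ | ⟨_, h2⟩
      · exact h1 heMk1
      · exact h2 h.2
    · rintro ⟨heP, h⟩
      refine ⟨heP, ?_⟩
      rcases (hmemD e).mp (hpsub heP) with ⟨h1, _⟩ | ⟨h1, _⟩
      · exact absurd ⟨heP, h1⟩ h
      · exact h1
  have hPMk1card : (P ∩ Mk1).card + (P ∩ Mk).card = P.card := by
    rw [hPMk1, Finset.card_sdiff_add_card_eq_card Finset.inter_subset_left]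
  -- A and B as set differences
  have hAeq : A = (Mk \ Mk1) \ (P ∩ Mk) := by
    ext e
    simp only [hAdef, Finset.mem_inter, Finset.mem_sdiff, hmemD e]
    constructor
    · rintro ⟨⟨hd, hnP⟩, hMke⟩
      rcases hd with ⟨_, h⟩ | ⟨_, h⟩
      · exact ⟨⟨hMke, h⟩, fun hc => hnP hc.1⟩
      · exact absurd hMke h
    · rintro ⟨⟨h1, h2⟩, h3⟩
      exact ⟨⟨Or.inl ⟨h1, h2⟩, fun hP => h3 ⟨hP, h1⟩⟩, h1⟩
  have hBeq : B = (Mk1 \ Mk) \ (P ∩ Mk1) := by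
    ext e
    simp only [hBdef, Finset.mem_inter, Finset.mem_sdiff, hmemD e]
    constructor
    · rintro ⟨⟨hd, hnP⟩, hMk1e⟩
      rcases hd with ⟨_, h⟩ | ⟨_, h⟩
      · exact absurd hMk1e h
      · exact ⟨⟨hMk1e, h⟩, fun hc => hnP hc.1⟩
    · rintro ⟨⟨h1, h2⟩, h3⟩
      exact ⟨⟨Or.inr ⟨h1, h2⟩, fun hP => h3 ⟨hP, h1⟩⟩, h1⟩
  have hPMksub : P ∩ Mk ⊆ Mk \ Mk1 := by
    intro e he
    obtain ⟨heP, heMk⟩ := Finset.mem_inter.mp he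
    rcases (hmemD e).mp (hpsub heP) with ⟨h1, h2⟩ | ⟨_, h2⟩
    · exact Finset.mem_sdiff.mpr ⟨h1, h2⟩
    · exact absurd heMk h2
  have hPMk1sub : P ∩ Mk1 ⊆ Mk1 \ Mk := by
    intro e he
    obtain ⟨heP, heMk1⟩ := Finset.mem_inter.mp he
    rcases (hmemD e).mp (hpsub heP) with ⟨_, h2⟩ | ⟨h1, h2⟩
    · exact absurd heMk1 h2
    · exact Finset.mem_sdiff.mpr ⟨h1, h2⟩
  have hAcard : A.card + (P ∩ Mk).card = (Mk \ Mk1).card := by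
    rw [hAeq, Finset.card_sdiff_add_card_eq_card hPMksub]
  have hBcard : B.card + (P ∩ Mk1).card = (Mk1 \ Mk).card := by
    rw [hBeq, Finset.card_sdiff_add_card_eq_card hPMk1sub]
  have hMkdecomp : (Mk \ Mk1).card + (Mk ∩ Mk1).card = k := by
    have := Finset.card_inter_add_card_sdiff Mk Mk1
    omega
  have hMk1decomp : (Mk1 \ Mk).card + (Mk ∩ Mk1).card = k + 1 := by
    have := Finset.card_inter_add_card_sdiff Mk1 Mk
    rw [Finset.inter_comm]
    omega
  have hodd : Odd p.edges.length := hp.2.2.2.1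
  have hAB : A.card = B.card := by
    obtain ⟨m, hm⟩ := hodd
    omega
  -- weight sums for the swapped matchings
  have hdisjA : Disjoint (Mk \ A) B :=
    Finset.disjoint_left.mpr fun e he hf =>
      hBnotMk e hf (Finset.mem_sdiff.mp he).1
  have hdisjB : Disjoint (Mk1 \ B) A :=
    Finset.disjoint_left.mpr fun e he hf =>
      hAnotMk1 e hf (Finset.mem_sdiff.mp he).1
  have hMk'card : ((Mk \ A) ∪ B).card = k := by
    rw [Finset.card_union_of_disjoint hdisjA]
    have := Finset.card_sdiff_add_card_eq_card hAsub
    omega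
  have hMk1'card : ((Mk1 \ B) ∪ A).card = k + 1 := by
    rw [Finset.card_union_of_disjoint hdisjB]
    have := Finset.card_sdiff_add_card_eq_card hBsub
    omega
  have hsum1 : ∑ e ∈ (Mk \ A) ∪ B, wt e =
      (∑ e ∈ Mk, wt e - ∑ e ∈ A, wt e) + ∑ e ∈ B, wt e := by
    rw [Finset.sum_union hdisjA, Finset.sum_sdiff_eq_sub hAsub]
  have hsum2 : ∑ e ∈ (Mk1 \ B) ∪ A, wt e =
      (∑ e ∈ Mk1, wt e - ∑ e ∈ B, wt e) + ∑ e ∈ A, wt e := by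
    rw [Finset.sum_union hdisjB, Finset.sum_sdiff_eq_sub hBsub]
  have h1 := hMkmax _ hMk' hMk'card
  have h2 := hMk1max _ hMk1' hMk1'card
  rw [hsum1] at h1
  rw [hsum2] at h2
  show ∑ e ∈ A, wt e = ∑ e ∈ B, wt e
  linarith
end

section
/- Let v_1, ..., v_{8k} be 8k vertices of a weighted graph G with pairwise distinct edge weights, each of degree at least 8k, sorted so that their e_{8k}-values (the weight of the 8k-th heaviest incident edge) are non-decreasing, and these are the 8k largest e_{8k}-values among all vertices of degree at least 8k. Then for each i, the vertex v_i has degree at least i in the trimmed subgraph G_T, and consequently G_T contains at least 4k(8k+1)/2 > k(16k-1) edges incident to {v_1,...,v_{8k}}. -/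
open SimpleGraph Finset

noncomputable instance {V : Type*} [Fintype V] [DecidableEq V] (G : SimpleGraph V)
    [DecidableRel G.Adj] (wt : Sym2 V → ℝ) (m : ℕ) (v : V) (e : Sym2 V) :
    Decidable (AmongHeaviest G wt m v e) := by
  unfold AmongHeaviest; infer_instance

/-- `e` is the `m`-th heaviest edge incident to `v`: exactly `m - 1` incident edges
are heavier. -/
def IsMthHeaviest {V : Type*} [Fintype V] [DecidableEq V] (G : SimpleGraph V)
    [DecidableRel G.Adj] (wt : Sym2 V → ℝ) (m : ℕ) (v : V) (e : Sym2 V) : Prop :=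
  e ∈ G.incidenceFinset v ∧
  ((G.incidenceFinset v).filter (fun f => wt e < wt f)).card = m - 1

section Aux

variable {V : Type*} [DecidableEq V]

/-- The number of edges of `S` strictly heavier than `e`. -/
noncomputable def rk (wt : Sym2 V → ℝ) (S : Finset (Sym2 V)) (e : Sym2 V) : ℕ :=
  (S.filter (fun f => wt e < wt f)).card

lemma rk_mono (wt : Sym2 V → ℝ) (S : Finset (Sym2 V)) {a e : Sym2 V}
    (h : wt a ≤ wt e) : rk wt S e ≤ rk wt S a :=
  Finset.card_le_card (Finset.monotone_filter_right S (fun f _ hf => lt_of_le_of_lt h hf))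

lemma rk_lt_of_lt (wt : Sym2 V → ℝ) (S : Finset (Sym2 V)) {a b : Sym2 V}
    (hb : b ∈ S) (h : wt a < wt b) : rk wt S b < rk wt S a := by
  apply Finset.card_lt_card
  rw [Finset.ssubset_iff_of_subset
    (Finset.monotone_filter_right S (fun f _ hf => lt_trans h hf))]
  exact ⟨b, Finset.mem_filter.2 ⟨hb, h⟩, fun hc => lt_irrefl _ (Finset.mem_filter.1 hc).2⟩

lemma wt_le_of_rk_le (wt : Sym2 V → ℝ) (S : Finset (Sym2 V)) {a b : Sym2 V}
    (hb : b ∈ S) (h : rk wt S a ≤ rk wt S b) : wt b ≤ wt a :=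
  le_of_not_gt fun hlt => absurd h (not_le.2 (rk_lt_of_lt wt S hb hlt))

lemma rk_lt_card (wt : Sym2 V → ℝ) (S : Finset (Sym2 V)) {e : Sym2 V}
    (he : e ∈ S) : rk wt S e < S.card := by
  refine lt_of_le_of_lt (Finset.card_le_card ?_) (Finset.card_erase_lt_of_mem he)
  intro f hf
  obtain ⟨hfS, hfw⟩ := Finset.mem_filter.1 hf
  exact Finset.mem_erase.2 ⟨fun hfe => lt_irrefl _ (hfe ▸ hfw), hfS⟩

lemma rk_injOn (wt : Sym2 V → ℝ) (S : Finset (Sym2 V))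
    (hinj : Set.InjOn wt S) : Set.InjOn (rk wt S) S := by
  intro a ha b hb hab
  by_contra hne
  have hwne : wt a ≠ wt b := fun h => hne (hinj ha hb h)
  rcases lt_or_gt_of_ne hwne with h | h
  · exact absurd hab (ne_of_gt (rk_lt_of_lt wt S hb h))
  · exact absurd hab (ne_of_lt (rk_lt_of_lt wt S ha h))

lemma rk_image (wt : Sym2 V → ℝ) (S : Finset (Sym2 V))
    (hinj : Set.InjOn wt S) : S.image (rk wt S) = Finset.range S.card := by
  apply Finset.eq_of_subset_of_card_le
  · intro n hn
    obtain ⟨e, he, rfl⟩ := Finset.mem_image.1 hn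
    exact Finset.mem_range.2 (rk_lt_card wt S he)
  · rw [Finset.card_range, Finset.card_image_of_injOn (rk_injOn wt S hinj)]

lemma exists_rk (wt : Sym2 V → ℝ) (S : Finset (Sym2 V))
    (hinj : Set.InjOn wt S) {n : ℕ} (hn : n < S.card) :
    ∃ e ∈ S, rk wt S e = n := by
  have : n ∈ S.image (rk wt S) := by
    rw [rk_image wt S hinj]; exact Finset.mem_range.2 hn
  simpa using this

lemma le_card_filter_rk (wt : Sym2 V → ℝ) (S : Finset (Sym2 V))
    (hinj : Set.InjOn wt S) {m : ℕ} (hm : m ≤ S.card) :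
    m ≤ ((S.filter (fun e => rk wt S e < m)).card) := by
  have hsub : Finset.range m ⊆ (S.filter (fun e => rk wt S e < m)).image (rk wt S) := by
    intro n hn
    rw [Finset.mem_range] at hn
    obtain ⟨e, he, hre⟩ := exists_rk wt S hinj (lt_of_lt_of_le hn hm)
    exact Finset.mem_image.2 ⟨e, Finset.mem_filter.2 ⟨he, by rw [hre]; exact hn⟩, hre⟩
  calc m = (Finset.range m).card := (Finset.card_range m).symm
    _ ≤ ((S.filter (fun e => rk wt S e < m)).image (rk wt S)).card := Finset.card_le_card hsub
    _ ≤ (S.filter (fun e => rk wt S e < m)).card := Finset.card_image_le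

end Aux

/-- Let `v 0, …, v (8k-1)` be `8k` distinct vertices of degree at least `8k` in a graph
`G` with distinct edge weights, sorted so that their `e_{8k}`-values (`wt (ev i)`, the
weight of the `8k`-th heaviest incident edge) are non-decreasing, and these are the `8k`
largest `e_{8k}`-values among all vertices of degree at least `8k`. Then, in the trimmed
subgraph `G_T` (edges among the `8k` heaviest at both endpoints), each `v i` has degree
at least `i + 1` (1-indexed: `v_i` has degree at least `i`), and consequently `G_T` has
more than `k(16k-1)` edges (at least `4k(8k+1)/2 = 2k(8k+1)`) incident to the `v i`. -/
theorem stmt_13 {V : Type*} [Fintype V] [DecidableEq V]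
    (G : SimpleGraph V) [DecidableRel G.Adj] (wt : Sym2 V → ℝ)
    (hwt : Set.InjOn wt G.edgeSet) (k : ℕ) (hk : 0 < k)
    (v : Fin (8 * k) → V) (hinj : Function.Injective v)
    (hdeg : ∀ i, 8 * k ≤ G.degree (v i))
    (ev : Fin (8 * k) → Sym2 V)
    (hev : ∀ i, IsMthHeaviest G wt (8 * k) (v i) (ev i))
    (hsorted : ∀ i j : Fin (8 * k), i ≤ j → wt (ev i) ≤ wt (ev j))
    (hlargest : ∀ w : V, 8 * k ≤ G.degree w → (∀ i, w ≠ v i) →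
      ∀ f : Sym2 V, IsMthHeaviest G wt (8 * k) w f → ∀ i, wt f ≤ wt (ev i)) :
    (∀ i : Fin (8 * k),
      (i : ℕ) + 1 ≤
        ((G.edgeFinset.filter
          (fun e => ∀ x ∈ e, AmongHeaviest G wt (8 * k) x e)).filter
            (fun e => v i ∈ e)).card) ∧
    2 * k * (8 * k + 1) ≤
      ((G.edgeFinset.filter
        (fun e => ∀ x ∈ e, AmongHeaviest G wt (8 * k) x e)).filter
          (fun e => ∃ i, v i ∈ e)).card ∧
    k * (16 * k - 1) <
      ((G.edgeFinset.filter
        (fun e => ∀ x ∈ e, AmongHeaviest G wt (8 * k) x e)).filter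
          (fun e => ∃ i, v i ∈ e)).card := by
  classical
  have hm0 : 0 < 8 * k := by omega
  set GT := G.edgeFinset.filter (fun e => ∀ x ∈ e, AmongHeaviest G wt (8*k) x e) with hGTdef
  have hwt' : ∀ u : V, Set.InjOn wt ((G.incidenceFinset u : Finset (Sym2 V)) : Set (Sym2 V)) := by
    intro u
    apply hwt.mono
    intro e he
    exact G.incidenceSet_subset u (by simpa using he)
  -- membership characterisations
  have hAH : ∀ u : V, ∀ e : Sym2 V, AmongHeaviest G wt (8*k) u e ↔
      (e ∈ G.incidenceFinset u ∧ rk wt (G.incidenceFinset u) e < (8*k)) := fun u e => Iff.rfl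
  have hMH : ∀ u : V, ∀ e : Sym2 V, IsMthHeaviest G wt (8*k) u e ↔
      (e ∈ G.incidenceFinset u ∧ rk wt (G.incidenceFinset u) e = (8*k) - 1) := fun u e => Iff.rfl
  -- Part 1
  have main : ∀ i : Fin (8*k), (i : ℕ) + 1 ≤ (GT.filter (fun e => v i ∈ e)).card := by
    intro i
    set S := G.incidenceFinset (v i) with hSdef
    have hSm : (8*k) ≤ S.card := by
      rw [hSdef, SimpleGraph.card_incidenceFinset_eq_degree]; exact hdeg i
    set T := S.filter (fun e => rk wt S e < (8*k)) with hTdef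
    have hT : (8*k) ≤ T.card := le_card_filter_rk wt S (hwt' (v i)) hSm
    set Bad := T.filter (fun e => ∃ j, i < j ∧ v j ∈ e) with hBaddef
    have hBadsub : Bad ⊆ T := Finset.filter_subset _ _
    have hBad : Bad.card ≤ (8*k) - (i + 1) := by
      have hsub : Bad ⊆ (Finset.univ.filter (fun j : Fin (8*k) => i < j)).image
          (fun j => s(v i, v j)) := by
        intro e he
        obtain ⟨hTe, j, hij, hj⟩ := Finset.mem_filter.1 he
        have hvi : v i ∈ e := ((G.mem_incidenceFinset (v i) e).1 (Finset.mem_filter.1 hTe).1).2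
        obtain ⟨w, rfl⟩ := Sym2.mem_iff_exists.1 hvi
        have hvjw : v j = w := by
          rcases Sym2.mem_iff.1 hj with h | h
          · exact absurd (hinj h) (ne_of_gt hij)
          · exact h
        exact Finset.mem_image.2 ⟨j, Finset.mem_filter.2 ⟨Finset.mem_univ _, hij⟩, by rw [hvjw]⟩
      calc Bad.card ≤ _ := Finset.card_le_card hsub
        _ ≤ (Finset.univ.filter (fun j : Fin (8*k) => i < j)).card := Finset.card_image_le
        _ = (Finset.Ioi i).card := by rw [Finset.filter_lt_eq_Ioi]
        _ = (8*k) - 1 - (i : ℕ) := Fin.card_Ioi i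
        _ ≤ (8*k) - (i + 1) := by omega
    have hsub2 : T \ Bad ⊆ GT.filter (fun e => v i ∈ e) := by
      intro e he
      obtain ⟨hTe, hnotbad⟩ := Finset.mem_sdiff.1 he
      obtain ⟨heS, hrk⟩ := Finset.mem_filter.1 hTe
      have heE : e ∈ G.edgeSet := G.incidenceSet_subset (v i) (by simpa [hSdef] using heS)
      have hvi : v i ∈ e := ((G.mem_incidenceFinset (v i) e).1 heS).2
      obtain ⟨w, rfl⟩ := Sym2.mem_iff_exists.1 hvi
      have hadj : G.Adj (v i) w := (SimpleGraph.mem_edgeSet G).1 heE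
      have hwne : w ≠ v i := hadj.ne'
      -- wt (ev i) ≤ wt e
      have hEvi := hev i
      have hwle : wt (ev i) ≤ wt s(v i, w) := by
        apply wt_le_of_rk_le wt S ((hMH (v i) (ev i)).1 hEvi).1
        rw [show rk wt S (ev i) = (8*k) - 1 from ((hMH (v i) (ev i)).1 hEvi).2]
        omega
      refine Finset.mem_filter.2 ⟨Finset.mem_filter.2
        ⟨(SimpleGraph.mem_edgeFinset).2 heE, ?_⟩, hvi⟩
      intro x hx
      rcases Sym2.mem_iff.1 hx with rfl | hxw
      · exact ⟨heS, hrk⟩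
      · -- the other endpoint
        rw [hxw]
        set Sw := G.incidenceFinset w with hSwdef
        have hwmem : s(v i, w) ∈ Sw := by
          rw [hSwdef, G.mem_incidenceFinset]
          exact ⟨heE, Sym2.mem_mk_right _ _⟩
        refine ⟨hwmem, ?_⟩
        by_cases hdw : G.degree w < (8*k)
        · calc (Sw.filter (fun f => wt s(v i, w) < wt f)).card
              ≤ Sw.card := Finset.card_le_card (Finset.filter_subset _ _)
            _ = G.degree w := SimpleGraph.card_incidenceFinset_eq_degree G w
            _ < (8*k) := hdw
        · push_neg at hdw
          have hSwm : (8*k) ≤ Sw.card := by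
            rw [hSwdef, SimpleGraph.card_incidenceFinset_eq_degree]; exact hdw
          have hgex : ∃ g, g ∈ Sw ∧ rk wt Sw g = (8*k) - 1 ∧ wt g ≤ wt (ev i) := by
            by_cases hwv : ∃ j, w = v j
            · obtain ⟨j, hwj⟩ := hwv
              have hji : j ≤ i := by
                by_contra hji
                push_neg at hji
                refine hnotbad (Finset.mem_filter.2 ⟨hTe, j, hji, ?_⟩)
                rw [← hwj]
                exact Sym2.mem_mk_right _ _
              obtain ⟨hg1, hg2⟩ := (hMH (v j) (ev j)).1 (hev j)
              have hSw2 : Sw = G.incidenceFinset (v j) := by rw [hSwdef, hwj]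
              rw [hSw2]
              exact ⟨ev j, hg1, hg2, hsorted j i hji⟩
            · push_neg at hwv
              obtain ⟨f, hf, hrf⟩ := exists_rk wt Sw (hwt' w)
                (show (8*k) - 1 < Sw.card by omega)
              exact ⟨f, hf, hrf,
                hlargest w hdw hwv f ((hMH w f).2 ⟨hf, hrf⟩) i⟩
          obtain ⟨g, hgS, hgr, hgle⟩ := hgex
          have : rk wt Sw s(v i, w) ≤ rk wt Sw g :=
            rk_mono wt Sw (le_trans hgle hwle)
          calc (Sw.filter (fun f => wt s(v i, w) < wt f)).card
              = rk wt Sw s(v i, w) := rfl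
            _ ≤ rk wt Sw g := this
            _ = (8*k) - 1 := hgr
            _ < (8*k) := by omega
    have h1 := Finset.card_le_card hsub2
    have h2 : (T \ Bad).card = T.card - Bad.card := Finset.card_sdiff_of_subset hBadsub
    have h3 : Bad.card ≤ T.card := Finset.card_le_card hBadsub
    have h4 : (i : ℕ) + 1 ≤ (8*k) := i.isLt
    omega
  set A := GT.filter (fun e => ∃ i, v i ∈ e) with hAdef
  refine ⟨main, ?_⟩
  -- double counting
  have hsum1 : ∑ i : Fin (8*k), ((i : ℕ) + 1) ≤
      ∑ i : Fin (8*k), (A.filter (fun e => v i ∈ e)).card := by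
    apply Finset.sum_le_sum
    intro i _
    refine le_trans (main i) (Finset.card_le_card ?_)
    intro e he
    obtain ⟨he1, he2⟩ := Finset.mem_filter.1 he
    exact Finset.mem_filter.2 ⟨Finset.mem_filter.2 ⟨he1, ⟨i, he2⟩⟩, he2⟩
  have hswap : ∑ i : Fin (8*k), (A.filter (fun e => v i ∈ e)).card =
      ∑ e ∈ A, (Finset.univ.filter (fun i : Fin (8*k) => v i ∈ e)).card := by
    simp_rw [Finset.card_filter]
    exact Finset.sum_comm
  have hfib : ∀ e ∈ A, (Finset.univ.filter (fun i : Fin (8*k) => v i ∈ e)).card ≤ 2 := by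
    intro e _
    induction e using Sym2.ind with
    | _ a b =>
      have h1 : (Finset.univ.filter (fun i : Fin (8*k) => v i ∈ s(a, b))).card ≤
          ({a, b} : Finset V).card := by
        apply Finset.card_le_card_of_injOn v
        · intro i hi
          have := (Finset.mem_filter.1 hi).2
          rcases Sym2.mem_iff.1 this with h | h <;> simp [h]
        · intro x _ y _ h
          exact hinj h
      exact le_trans h1 (Finset.card_insert_le _ _ |>.trans (by simp))
  have hsum2 : ∑ e ∈ A, (Finset.univ.filter (fun i : Fin (8*k) => v i ∈ e)).card ≤ A.card * 2 :=
    Finset.sum_le_card_nsmul _ _ 2 hfib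
  have hgauss : (∑ i ∈ Finset.range (8*k), (i + 1)) * 2 = (8*k) * ((8*k) + 1) := by
    have h2 : ∑ i ∈ Finset.range ((8*k) + 1), i = ∑ i ∈ Finset.range (8*k), (i + 1) := by
      rw [Finset.sum_range_succ' (fun i => i) (8*k)]
      simp
    rw [← h2, Finset.sum_range_id_mul_two]
    simp [Nat.mul_comm]
  have hS1 : (∑ i : Fin (8*k), ((i : ℕ) + 1)) * 2 = (8*k) * ((8*k) + 1) := by
    rw [Fin.sum_univ_eq_sum_range (fun n => n + 1) (8*k)]
    exact hgauss
  have hub : (8*k) * ((8*k) + 1) ≤ 4 * A.card := by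
    have hc : ∑ i : Fin (8*k), ((i : ℕ) + 1) ≤ A.card * 2 := by
      refine le_trans hsum1 ?_
      rw [hswap]
      simpa using Finset.sum_le_card_nsmul A _ 2 hfib
    calc (8*k) * ((8*k) + 1) = (∑ i : Fin (8*k), ((i : ℕ) + 1)) * 2 := hS1.symm
      _ ≤ (A.card * 2) * 2 := by omega
      _ = 4 * A.card := by ring
  have ha : 2 * k * ((8*k) + 1) ≤ A.card := by
    nlinarith
  refine ⟨ha, ?_⟩
  obtain ⟨k', rfl⟩ : ∃ k', k = k' + 1 := ⟨k - 1, by omega⟩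
  have hsub16 : 16 * (k' + 1) - 1 = 16 * k' + 15 := by omega
  rw [hsub16]
  nlinarith
end
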